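/- arXiv:2508.11444 — 6 statements merged into one kernel-verified Lean document; each statement's English description precedes it below -/
import Mathlib

section
/- Every 2-connected graph (with at least one edge) admits an ear decomposition: a sequence of paths P_1,...,P_f such that every edge belongs to exactly one path, P_1 is a single edge, and for i>1, P_i is a path with at least one edge whose two distinct endpoints lie in the union of vertices of the previous paths while all its internal vertices are new. -/
/-- A graph is 2-connected: connected, at least 2 vertices, and no
cutvertex (no vertex whose removal disconnects the graph). -/
def TwoConnected {W : Type} (H : SimpleGraph W) : Prop :=
  H.Connected ∧ 2 ≤ Nat.card W ∧ ∀ w : W, (H.induce {u | u ≠ w}).Connected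

/-- An ear decomposition of `G`: a sequence of paths (`ears`)
`P_0, …, P_{f-1}` in `G` such that every edge of `G` belongs to exactly
one ear, the first ear is a single edge, and each later ear is a path
with at least one edge whose two distinct endpoints lie among the
vertices of the previous ears, while all its internal vertices are new. -/
structure EarDecomposition {V : Type} (G : SimpleGraph V) where
  f : ℕ
  hf : 0 < f
  src : Fin f → V
  tgt : Fin f → V
  ear : ∀ i : Fin f, G.Walk (src i) (tgt i)
  isPath : ∀ i, (ear i).IsPath
  /-- every vertex of `G` belongs to some ear -/
  vertexCover : ∀ v : V, ∃ i : Fin f, v ∈ (ear i).support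
  /-- every edge of `G` belongs to exactly one ear -/
  cover : ∀ e ∈ G.edgeSet, ∃! i : Fin f, e ∈ (ear i).edges
  /-- the first ear is a single edge -/
  firstSingle : (ear ⟨0, hf⟩).length = 1
  /-- later ears have at least one edge -/
  earNonempty : ∀ i : Fin f, 0 < i.val → 0 < (ear i).length
  /-- later ears have two distinct endpoints -/
  distinctEnds : ∀ i : Fin f, 0 < i.val → src i ≠ tgt i
  /-- the endpoints of a later ear lie among the vertices of previous ears -/
  srcOld : ∀ i : Fin f, 0 < i.val → ∃ j : Fin f, j < i ∧ src i ∈ (ear j).support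
  tgtOld : ∀ i : Fin f, 0 < i.val → ∃ j : Fin f, j < i ∧ tgt i ∈ (ear j).support
  /-- internal vertices of a later ear are new -/
  internalNew : ∀ i : Fin f, 0 < i.val → ∀ v ∈ (ear i).support,
    v ≠ src i → v ≠ tgt i → ∀ j : Fin f, j < i → v ∉ (ear j).support

/-
Ears are added greedily to a partial ear decomposition, whose set of covered edges only grows.
While some vertex is unreached, connectivity gives an edge `xy` leaving the reached set at `x`;
as `G - x` is connected, a path from `y` to another reached vertex, cut where it first returns to
the reached set, closes an ear through `xy`. Once every vertex is reached, each uncovered edge is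
an ear by itself. A partial decomposition with maximal covered set exists by finiteness, and
therefore covers every vertex and every edge.
-/

open SimpleGraph Set

namespace SimpleGraph.Walk

variable {V : Type*} {G : SimpleGraph V} {S : Set V}

lemma IsPath.exists_prefix_meets_only_at_end {a b : V} {w : G.Walk a b} (hw : w.IsPath)
    (hb : b ∈ S) : ∃ z ∈ S, ∃ q : G.Walk a z,
      q.IsPath ∧ q.support ⊆ w.support ∧ ∀ v ∈ q.support, v ∈ S → v = z := by
  induction w with
  | nil => exact ⟨_, hb, Walk.nil, by simp, by simp, by simp⟩
  | @cons a c b h p ih =>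
    rw [cons_isPath_iff] at hw
    by_cases ha : a ∈ S
    · exact ⟨a, ha, Walk.nil, by simp, by simp, by simp⟩
    obtain ⟨z, hz, q, hq, hqp, hqS⟩ := ih hw.1 hb
    refine ⟨z, hz, cons h q, (cons_isPath_iff _ _).2 ⟨hq, fun haq => hw.2 (hqp haq)⟩,
      List.cons_subset_cons _ hqp, ?_⟩
    rintro v (_ | ⟨_, hv⟩) hvS
    · exact absurd hvS ha
    · exact hqS v hv hvS

lemma exists_notMem_of_mem_edges {a z : V} {q : G.Walk a z}
    (hq : ∀ v ∈ q.support, v ∈ S → v = z) {e : Sym2 V} (he : e ∈ q.edges) :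
    ∃ v ∈ e, v ∉ S := by
  induction e using Sym2.ind with
  | _ u v =>
    by_contra! h
    have hu := hq u (q.fst_mem_support_of_mem_edges he) (h u (Sym2.mem_mk_left u v))
    have hv := hq v (q.snd_mem_support_of_mem_edges he) (h v (Sym2.mem_mk_right u v))
    exact (q.adj_of_mem_edges he).ne (hu.trans hv.symm)

end SimpleGraph.Walk

section

variable {V : Type*} {G : SimpleGraph V}

structure Ear (G : SimpleGraph V) where
  src : V
  tgt : V
  walk : G.Walk src tgt

namespace Ear

def support (E : Ear G) : List V := E.walk.support

def edges (E : Ear G) : List (Sym2 V) := E.walk.edges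

structure AttachesTo (E : Ear G) (S : Set V) : Prop where
  src_ne_tgt : E.src ≠ E.tgt
  src_mem : E.src ∈ S
  tgt_mem : E.tgt ∈ S
  internal_notMem : ∀ v ∈ E.support, v ≠ E.src → v ≠ E.tgt → v ∉ S

end Ear

open Walk in
lemma exists_ear_of_adj {S : Set V} {x y s : V} (hconn : (G.induce {u | u ≠ x}).Preconnected)
    (hxy : G.Adj x y) (hx : x ∈ S) (hy : y ∉ S) (hs : s ∈ S) (hsx : s ≠ x) :
    ∃ E : Ear G, E.walk.IsPath ∧ E.AttachesTo S ∧ s(x, y) ∈ E.edges ∧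
      ∀ e ∈ E.edges, ∃ v ∈ e, v ∉ S := by
  obtain ⟨p, hp⟩ := (hconn ⟨y, hxy.ne'⟩ ⟨s, hsx⟩).exists_isPath
  let w : G.Walk y s := p.map (Embedding.induce _).toHom
  have hxw : x ∉ w.support := by
    change x ∉ (p.map _).support
    rw [Walk.support_map, List.mem_map]
    rintro ⟨u, -, hu⟩
    exact u.2 hu
  have hw : w.IsPath := hp.map (Embedding.induce (G := G) _).injective
  obtain ⟨z, hz, q, hq, hqw, hqS⟩ := hw.exists_prefix_meets_only_at_end hs
  refine ⟨⟨x, z, cons hxy q⟩, (cons_isPath_iff _ _).2 ⟨hq, fun h => hxw (hqw h)⟩,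
    ⟨?_, hx, hz, ?_⟩, by simp [Ear.edges], ?_⟩
  · exact fun hxz : x = z => hxw (hqw (hxz ▸ q.end_mem_support))
  · rintro v (_ | ⟨_, hv⟩) hvx hvz hvS
    · exact hvx rfl
    · exact hvz (hqS v hv hvS)
  · rintro e (_ | ⟨_, he⟩)
    · exact ⟨y, Sym2.mem_mk_right x y, hy⟩
    · exact exists_notMem_of_mem_edges hqS he

structure PartialEarDecomposition (G : SimpleGraph V) where
  f : ℕ
  hf : 0 < f
  ears : Fin f → Ear G
  isPath : ∀ i, (ears i).walk.IsPath
  eq_of_mem_edges : ∀ i j e, e ∈ (ears i).edges → e ∈ (ears j).edges → i = j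
  firstSingle : (ears ⟨0, hf⟩).walk.length = 1
  attaches : ∀ i : Fin f, 0 < i.val →
    (ears i).AttachesTo {v | ∃ j < i, v ∈ (ears j).support}

namespace PartialEarDecomposition

variable (P : PartialEarDecomposition G)

def verts : Set V := {v | ∃ i, v ∈ (P.ears i).support}

def covered : Set (Sym2 V) := {e | ∃ i, e ∈ (P.ears i).edges}

lemma mem_verts_of_mem_covered {e : Sym2 V} (he : e ∈ P.covered) {v : V} (hv : v ∈ e) :
    v ∈ P.verts := by
  obtain ⟨i, hi⟩ := he
  exact ⟨i, (P.ears i).walk.mem_support_of_mem_edges hi hv⟩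

def ofAdj {x y : V} (h : G.Adj x y) : PartialEarDecomposition G where
  f := 1
  hf := Nat.one_pos
  ears _ := ⟨x, y, h.toWalk⟩
  isPath _ := by simp [h.ne]
  eq_of_mem_edges i j _ _ _ := Subsingleton.elim i j
  firstSingle := rfl
  attaches i hi := absurd hi (by omega)

def snoc (E : Ear G) (hpath : E.walk.IsPath) (hE : E.AttachesTo P.verts)
    (hnew : ∀ e ∈ E.edges, e ∉ P.covered) : PartialEarDecomposition G where
  f := P.f + 1
  hf := P.f.succ_pos
  ears := Fin.snoc (α := fun _ => Ear G) P.ears E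
  isPath := Fin.lastCases (by rw [Fin.snoc_last]; exact hpath)
    (fun i => by rw [Fin.snoc_castSucc]; exact P.isPath i)
  eq_of_mem_edges i j e := by
    induction i using Fin.lastCases with
    | last =>
      induction j using Fin.lastCases with
      | last => exact fun _ _ => rfl
      | cast j =>
        simp only [Fin.snoc_last, Fin.snoc_castSucc]
        exact fun hi hj => absurd ⟨j, hj⟩ (hnew e hi)
    | cast i =>
      induction j using Fin.lastCases with
      | last =>
        simp only [Fin.snoc_last, Fin.snoc_castSucc]
        exact fun hi hj => absurd ⟨i, hi⟩ (hnew e hj)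
      | cast j =>
        simp only [Fin.snoc_castSucc]
        exact fun hi hj => congrArg _ (P.eq_of_mem_edges i j e hi hj)
  firstSingle := by
    rw [show (⟨0, _⟩ : Fin (P.f + 1)) = Fin.castSucc ⟨0, P.hf⟩ from rfl, Fin.snoc_castSucc]
    exact P.firstSingle
  attaches i := by
    induction i using Fin.lastCases with
    | last =>
      intro _
      simpa [Fin.exists_fin_succ', Fin.castSucc_lt_last, verts] using hE
    | cast i =>
      intro hi
      simpa [Fin.exists_fin_succ', Fin.castSucc_lt_castSucc_iff, (Fin.castSucc_lt_last i).asymm]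
        using P.attaches i hi

lemma covered_ssubset_snoc (E : Ear G) (hpath : E.walk.IsPath) (hE : E.AttachesTo P.verts)
    (hnew : ∀ e ∈ E.edges, e ∉ P.covered) {e : Sym2 V} (he : e ∈ E.edges) :
    P.covered ⊂ (P.snoc E hpath hE hnew).covered := by
  refine (Set.ssubset_iff_of_subset ?_).2 ⟨e, ⟨Fin.last _, ?_⟩, hnew e he⟩
  · rintro e ⟨i, hi⟩
    exact ⟨i.castSucc, by simpa [snoc] using hi⟩
  · simpa [snoc] using he

lemma exists_mem_verts_ne (x : V) : ∃ s ∈ P.verts, s ≠ x := by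
  let E₀ := P.ears ⟨0, P.hf⟩
  have hE₀ : E₀.src ≠ E₀.tgt := (Walk.adj_of_length_eq_one P.firstSingle).ne
  by_cases h : E₀.src = x
  · exact ⟨E₀.tgt, ⟨_, E₀.walk.end_mem_support⟩, h ▸ hE₀.symm⟩
  · exact ⟨E₀.src, ⟨_, E₀.walk.start_mem_support⟩, h⟩

lemma exists_covered_ssubset_of_verts_ne_univ (hG : G.Preconnected)
    (hcut : ∀ x, (G.induce {u | u ≠ x}).Preconnected) (hP : P.verts ≠ univ) :
    ∃ P' : PartialEarDecomposition G, P.covered ⊂ P'.covered := by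
  obtain ⟨v, hv⟩ := (ne_univ_iff_exists_notMem _).1 hP
  obtain ⟨u, hu, -⟩ := P.exists_mem_verts_ne v
  obtain ⟨d, -, hx, hy⟩ := (hG u v).some.exists_boundary_dart P.verts hu hv
  obtain ⟨s, hs, hsx⟩ := P.exists_mem_verts_ne d.fst
  obtain ⟨E, hpath, hE, hxy, houtside⟩ := exists_ear_of_adj (hcut d.fst) d.adj hx hy hs hsx
  have hnew : ∀ e ∈ E.edges, e ∉ P.covered := fun e he hc =>
    let ⟨_, hve, hvS⟩ := houtside e he
    hvS (P.mem_verts_of_mem_covered hc hve)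
  exact ⟨_, P.covered_ssubset_snoc E hpath hE hnew hxy⟩

lemma exists_covered_ssubset_of_notMem_covered (hP : P.verts = univ) {e : Sym2 V}
    (he : e ∈ G.edgeSet) (hne : e ∉ P.covered) :
    ∃ P' : PartialEarDecomposition G, P.covered ⊂ P'.covered := by
  induction e using Sym2.ind with
  | _ x y =>
    have hxy : G.Adj x y := he
    let E : Ear G := ⟨x, y, hxy.toWalk⟩
    have hE : E.AttachesTo P.verts :=
      ⟨hxy.ne, hP ▸ mem_univ x, hP ▸ mem_univ y, by simp +contextual [E, Ear.support]⟩
    have hnew : ∀ e ∈ E.edges, e ∉ P.covered := by simpa [E, Ear.edges] using hne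
    exact ⟨_, P.covered_ssubset_snoc E (by simp [E, hxy.ne]) hE hnew
      (by simp [E, Ear.edges] : s(x, y) ∈ E.edges)⟩

lemma exists_maximal_covered [Finite V] (P₀ : PartialEarDecomposition G) :
    ∃ P : PartialEarDecomposition G,
      ∀ P' : PartialEarDecomposition G, ¬ P.covered ⊂ P'.covered := by
  obtain ⟨P, -, hP⟩ :=
    Set.Finite.exists_maximalFor' covered univ (toFinite _) ⟨P₀, trivial⟩
  exact ⟨P, fun P' h => h.2 (hP trivial h.1)⟩

end PartialEarDecomposition

end

def PartialEarDecomposition.toEarDecomposition {V : Type} {G : SimpleGraph V}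
    (P : PartialEarDecomposition G) (hverts : P.verts = univ) (hcov : G.edgeSet ⊆ P.covered) :
    EarDecomposition G where
  f := P.f
  hf := P.hf
  src i := (P.ears i).src
  tgt i := (P.ears i).tgt
  ear i := (P.ears i).walk
  isPath := P.isPath
  vertexCover v := (hverts ▸ mem_univ v : v ∈ P.verts)
  cover e he :=
    let ⟨i, hi⟩ := hcov he
    ⟨i, hi, fun j hj => P.eq_of_mem_edges j i e hj hi⟩
  firstSingle := P.firstSingle
  earNonempty i hi :=
    Walk.not_nil_iff_lt_length.1 (Walk.not_nil_of_ne (P.attaches i hi).src_ne_tgt)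
  distinctEnds i hi := (P.attaches i hi).src_ne_tgt
  srcOld i hi := (P.attaches i hi).src_mem
  tgtOld i hi := (P.attaches i hi).tgt_mem
  internalNew i hi v hv hsrc htgt j hj hvj :=
    (P.attaches i hi).internal_notMem v hv hsrc htgt ⟨j, hj, hvj⟩

theorem two_connected_has_ear_decomposition_general {V : Type} [Fintype V]
    (G : SimpleGraph V) (h2 : TwoConnected G) (he : G.edgeSet.Nonempty) :
    Nonempty (EarDecomposition G) := by
  obtain ⟨x, y, hxy⟩ := G.ne_bot_iff_exists_adj.1 (edgeSet_nonempty.1 he)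
  obtain ⟨P, hP⟩ := (PartialEarDecomposition.ofAdj hxy).exists_maximal_covered
  have hverts : P.verts = univ := by
    by_contra hne
    obtain ⟨P', h⟩ := P.exists_covered_ssubset_of_verts_ne_univ h2.1.preconnected
      (fun x => (h2.2.2 x).preconnected) hne
    exact hP P' h
  have hcov : G.edgeSet ⊆ P.covered := by
    intro e he
    by_contra hne
    obtain ⟨P', h⟩ := P.exists_covered_ssubset_of_notMem_covered hverts he hne
    exact hP P' h
  exact ⟨P.toEarDecomposition hverts hcov⟩

/-- Every 2-connected graph with at least one edge admits an
ear decomposition. -/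
theorem two_connected_has_ear_decomposition {V : Type} [Fintype V] [DecidableEq V]
    (G : SimpleGraph V) (h2 : TwoConnected G) (he : G.edgeSet.Nonempty) :
    Nonempty (EarDecomposition G) :=
  two_connected_has_ear_decomposition_general G h2 he
end

section
/- Every 2-connected outerplanar graph with at least 3 vertices has a vertex of degree exactly 2. -/
/-- `G` is outerplanar: it has a drawing with all vertices (in some
order) on a circle and all edges drawn as pairwise non-crossing chords.
Two chords `{a,b}` and `{c,d}` cross exactly when their endpoints
interleave, i.e. (after cutting the circle open into a linear order)
`a < c < b < d`. -/
def Outerplanar {V : Type} (G : SimpleGraph V) : Prop :=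
  ∃ f : V ↪ ℕ, ∀ a b c d : V, G.Adj a b → G.Adj c d →
    ¬ (f a < f c ∧ f c < f b ∧ f b < f d)

/-!
Order the vertices along the circle. Among the chords `ab` with some vertex strictly between
`a` and `b`, take one enclosing the fewest vertices, and let `c` be the first vertex after `a`.
No chord leaves the arc `[a, b]` from `c`, so `a` is the only neighbour of `c` before it; and
two neighbours `y < z` after `c` would make `cz` a chord enclosing fewer vertices. Hence
`deg c ≤ 2`. Such a chord exists as soon as the first vertex has two neighbours, and in a
2-connected graph on at least three vertices every vertex does.
-/

open Finset SimpleGraph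

theorem Function.Injective.exists_lt_of_not_subsingleton {α β : Type*} [LinearOrder β]
    {f : α → β} (hf : Function.Injective f) {s : Set α} (hs : ¬ s.Subsingleton) :
    ∃ y ∈ s, ∃ z ∈ s, f y < f z := by
  obtain ⟨_, ⟨y, hy, rfl⟩, _, ⟨z, hz, rfl⟩, hyz⟩ :=
    ((Set.not_subsingleton_iff.1 hs).image hf).exists_lt
  exact ⟨y, hy, z, hz, hyz⟩

theorem SimpleGraph.degree_le_two_of_subsingleton {V β : Type*} [LinearOrder β]
    {G : SimpleGraph V} {f : V → β} (hf : Function.Injective f) {c : V}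
    [Fintype (G.neighborSet c)] (hlow : {d | G.Adj c d ∧ f d < f c}.Subsingleton)
    (hup : {d | G.Adj c d ∧ f c < f d}.Subsingleton) : G.degree c ≤ 2 := by
  rw [← card_neighborFinset_eq_degree, ← card_filter_add_card_filter_not (f · < f c)]
  refine add_le_add (card_le_one.2 ?_) (card_le_one.2 ?_)
  · simp only [mem_filter, mem_neighborFinset]
    exact fun y hy z hz => hlow hy hz
  · simp only [mem_filter, mem_neighborFinset, not_lt]
    exact fun y hy z hz =>
      hup ⟨hy.1, hy.2.lt_of_ne (hf.ne hy.1.ne)⟩ ⟨hz.1, hz.2.lt_of_ne (hf.ne hz.1.ne)⟩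

section

variable {V : Type} {G : SimpleGraph V}

theorem TwoConnected.exists_adj_adj_ne [Fintype V] (hG : TwoConnected G)
    (hV : 3 ≤ Fintype.card V) (v : V) : ∃ x y, G.Adj v x ∧ G.Adj v y ∧ x ≠ y := by
  classical
  obtain ⟨hconn, -, hcut⟩ := hG
  obtain ⟨t, htv⟩ := Fintype.exists_ne_of_one_lt_card (by omega) v
  obtain ⟨x, hx⟩ := (hconn.preconnected v t).nonempty_neighborSet_left htv.symm
  obtain ⟨s, -, hs⟩ : ∃ s ∈ (univ : Finset V), s ∉ ({v, x} : Finset V) :=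
    exists_mem_notMem_of_card_lt_card <| card_le_two.trans_lt (by rw [card_univ]; omega)
  simp only [mem_insert, mem_singleton, not_or] at hs
  obtain ⟨y, hy⟩ := ((hcut x).preconnected ⟨v, hx.ne⟩ ⟨s, hs.2⟩).nonempty_neighborSet_left
    (by simpa [eq_comm] using hs.1)
  exact ⟨x, y, hx, hy, fun h => y.2 h.symm⟩

theorem TwoConnected.two_le_degree [Fintype V] (hG : TwoConnected G)
    (hV : 3 ≤ Fintype.card V) (v : V) [Fintype (G.neighborSet v)] : 2 ≤ G.degree v := by
  obtain ⟨x, y, hx, hy, hxy⟩ := hG.exists_adj_adj_ne hV v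
  rw [← card_neighborFinset_eq_degree]
  exact one_lt_card.2 ⟨x, by simpa, y, by simpa, hxy⟩

def NoncrossingChords (G : SimpleGraph V) (f : V ↪ ℕ) : Prop :=
  ∀ a b c d : V, G.Adj a b → G.Adj c d → ¬ (f a < f c ∧ f c < f b ∧ f b < f d)

theorem NoncrossingChords.neighbor_mem_Icc {f : V ↪ ℕ} (hf : NoncrossingChords G f)
    {a b c d : V} (hab : G.Adj a b) (hac : f a < f c) (hcb : f c < f b) (hcd : G.Adj c d) :
    f d ∈ Set.Icc (f a) (f b) :=
  ⟨not_lt.1 fun hda => hf d c a b hcd.symm hab ⟨hda, hac, hcb⟩,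
    not_lt.1 fun hbd => hf a b c d hab hcd ⟨hac, hcb, hbd⟩⟩

section Finite

variable [Fintype V] {f : V ↪ ℕ}

def strictlyBetween (f : V ↪ ℕ) (a b : V) : Finset V :=
  univ.filter fun w => f a < f w ∧ f w < f b

@[simp]
theorem mem_strictlyBetween {a b w : V} : w ∈ strictlyBetween f a b ↔ f a < f w ∧ f w < f b := by
  simp [strictlyBetween]

theorem NoncrossingChords.exists_degree_le_two_of_adj [DecidableRel G.Adj]
    (hf : NoncrossingChords G f) {a b : V} (hab : G.Adj a b)
    (hne : (strictlyBetween f a b).Nonempty) : ∃ c, G.degree c ≤ 2 := by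
  induction hn : #(strictlyBetween f a b) using Nat.strong_induction_on generalizing a b with
  | _ n ih =>
  obtain ⟨c, hc, hc_min⟩ := (strictlyBetween f a b).exists_min_image f hne
  rw [mem_strictlyBetween] at hc
  have hlow : {d | G.Adj c d ∧ f d < f c}.Subsingleton := by
    suffices ∀ d, G.Adj c d → f d < f c → d = a from
      fun y hy z hz => (this y hy.1 hy.2).trans (this z hz.1 hz.2).symm
    intro d hcd hdc
    refine f.injective (le_antisymm (not_lt.1 fun had => ?_)
      (hf.neighbor_mem_Icc hab hc.1 hc.2 hcd).1)
    exact (hc_min d (mem_strictlyBetween.2 ⟨had, hdc.trans hc.2⟩)).not_gt hdc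
  by_cases hup : {d | G.Adj c d ∧ f c < f d}.Subsingleton
  · exact ⟨c, degree_le_two_of_subsingleton f.injective hlow hup⟩
  obtain ⟨y, ⟨-, hcy⟩, z, ⟨hcz, -⟩, hyz⟩ := f.injective.exists_lt_of_not_subsingleton hup
  have hsub : strictlyBetween f c z ⊂ strictlyBetween f a b := by
    refine (ssubset_iff_of_subset fun w hw => ?_).2 ⟨c, mem_strictlyBetween.2 hc, by simp⟩
    rw [mem_strictlyBetween] at hw ⊢
    exact ⟨hc.1.trans hw.1, hw.2.trans_le (hf.neighbor_mem_Icc hab hc.1 hc.2 hcz).2⟩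
  exact ih _ (hn ▸ card_lt_card hsub) hcz ⟨y, mem_strictlyBetween.2 ⟨hcy, hyz⟩⟩ rfl

theorem Outerplanar.exists_degree_le_two [Nonempty V] [DecidableRel G.Adj]
    (hG : Outerplanar G) : ∃ v, G.degree v ≤ 2 := by
  obtain ⟨f, hf⟩ := hG
  obtain ⟨m, -, hm⟩ := univ.exists_min_image f univ_nonempty
  have hlow : {d | G.Adj m d ∧ f d < f m}.Subsingleton :=
    fun d hd => absurd (hm d (mem_univ d)) hd.2.not_ge
  by_cases hup : {d | G.Adj m d ∧ f m < f d}.Subsingleton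
  · exact ⟨m, degree_le_two_of_subsingleton f.injective hlow hup⟩
  obtain ⟨y, ⟨-, hmy⟩, z, ⟨hmz, -⟩, hyz⟩ := f.injective.exists_lt_of_not_subsingleton hup
  exact NoncrossingChords.exists_degree_le_two_of_adj hf hmz
    ⟨y, mem_strictlyBetween.2 ⟨hmy, hyz⟩⟩

end Finite

end

theorem outerplanar_two_connected_has_degree_two_vertex_general {V : Type}
    [Fintype V] (G : SimpleGraph V) [DecidableRel G.Adj]
    (h2 : TwoConnected G) (h3 : 3 ≤ Fintype.card V) (hout : Outerplanar G) :
    ∃ v : V, G.degree v = 2 := by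
  have : Nonempty V := Fintype.card_pos_iff.1 (by omega)
  obtain ⟨v, hv⟩ := hout.exists_degree_le_two
  exact ⟨v, hv.antisymm (h2.two_le_degree h3 v)⟩

/-- Every 2-connected outerplanar graph with at least 3
vertices has a vertex of degree exactly 2. -/
theorem outerplanar_two_connected_has_degree_two_vertex {V : Type}
    [Fintype V] [DecidableEq V] (G : SimpleGraph V) [DecidableRel G.Adj]
    (h2 : TwoConnected G) (h3 : 3 ≤ Fintype.card V) (hout : Outerplanar G) :
    ∃ v : V, G.degree v = 2 :=
  outerplanar_two_connected_has_degree_two_vertex_general G h2 h3 hout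
end

section
/- Let G be a plane triangulated multigraph without loops, and let M be a set of edges of G whose dual edges form a perfect matching of the dual graph G*. Then the subgraph H = (V(G), E(G) \ M) is bipartite, and for every angle ∠uvw of G (two edges (u,v), (v,w) consecutive in the rotation at v, bounding a common face), at least one of the edges (u,v), (v,w) belongs to H. -/
/-- A combinatorial map (rotation system): a finite set of darts `D`, a
fixed-point-free involution `α` pairing the darts into edges, and a
permutation `σ` whose orbits are the counterclockwise rotations of darts
around the vertices.  Vertices are the orbits of `σ`, edges the orbits of
`α`, and faces the orbits of `φ = σ ∘ α`. -/
structure CombMap where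
  D : Type
  [fintypeD : Fintype D]
  [decD : DecidableEq D]
  σ : Equiv.Perm D
  α : Equiv.Perm D
  α_invol : ∀ d, α (α d) = d
  α_fpf : ∀ d, α d ≠ d

attribute [instance] CombMap.fintypeD CombMap.decD

namespace CombMap

variable (M : CombMap)

/-- The face permutation `φ = σ ∘ α`. -/
def φ : Equiv.Perm M.D := M.α.trans M.σ

/-- Two darts emanate from the same vertex. -/
def SameVertex : M.D → M.D → Prop := M.σ.SameCycle

/-- Two darts belong to the same edge. -/
def SameEdge : M.D → M.D → Prop := M.α.SameCycle

/-- Two darts lie on the boundary walk of the same face. -/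
def SameFace : M.D → M.D → Prop := M.φ.SameCycle

def orbitSetoid (f : Equiv.Perm M.D) : Setoid M.D :=
  ⟨f.SameCycle, ⟨fun x => Equiv.Perm.SameCycle.refl f x,
    fun h => h.symm, fun h h' => h.trans h'⟩⟩

/-- One step between darts (to the next dart at the vertex, or to the
other dart of the edge). -/
def Step (a b : M.D) : Prop := b = M.σ a ∨ b = M.α a

/-- The two darts lie in the same connected component. -/
def Reach : M.D → M.D → Prop := Relation.EqvGen M.Step

/-- The map is connected. -/
def Connected : Prop := ∀ a b : M.D, M.Reach a b

def reachSetoid : Setoid M.D := ⟨M.Reach, Relation.EqvGen.is_equivalence _⟩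

/-- Number of vertices. -/
noncomputable def nV : ℕ := Nat.card (Quotient (M.orbitSetoid M.σ))
/-- Number of edges. -/
noncomputable def nE : ℕ := Nat.card (Quotient (M.orbitSetoid M.α))
/-- Number of faces. -/
noncomputable def nF : ℕ := Nat.card (Quotient (M.orbitSetoid M.φ))
/-- Number of connected components. -/
noncomputable def nC : ℕ := Nat.card (Quotient M.reachSetoid)

/-- Genus zero, via Euler's formula (componentwise): the combinatorial map
corresponds to a crossing-free drawing in the plane/sphere. -/
def Planar : Prop := (M.nV : ℤ) - (M.nE : ℤ) + (M.nF : ℤ) = 2 * (M.nC : ℤ)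

/-- The dart `d` lies on a loop. -/
def IsLoopDart (d : M.D) : Prop := M.SameVertex d (M.α d)

def Loopless : Prop := ∀ d, ¬ M.IsLoopDart d

/-- Every face is a triangle (boundary walk of length 3). -/
def Triangulated : Prop := ∀ d, M.φ (M.φ (M.φ d)) = d ∧ M.φ d ≠ d

/-- There is a bigon, i.e. a face of degree 2. -/
def HasBigon : Prop := ∃ d, M.φ (M.φ d) = d ∧ M.φ d ≠ d

/-- Darts surviving after deleting the vertex of `d₀` (and its incident
edges). -/
def AvoidsVertex (d₀ d : M.D) : Prop :=
  ¬ M.SameVertex d₀ d ∧ ¬ M.SameVertex d₀ (M.α d)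

def StepIn (P : M.D → Prop) (a b : M.D) : Prop := P a ∧ P b ∧ M.Step a b

/-- The vertex of `d₀` is a cutvertex: deleting it disconnects the map. -/
def IsCutVertexDart (d₀ : M.D) : Prop :=
  ∃ a b, M.AvoidsVertex d₀ a ∧ M.AvoidsVertex d₀ b ∧
    ¬ Relation.EqvGen (M.StepIn (M.AvoidsVertex d₀)) a b

/-- 2-connected: connected, at least two vertices, no loops (a vertex with
a loop counts as a cutvertex) and no cutvertex. -/
def TwoConnected : Prop :=
  M.Connected ∧ (∃ d d', ¬ M.SameVertex d d') ∧ M.Loopless ∧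
    ∀ d₀, ¬ M.IsCutVertexDart d₀

end CombMap

/-- `ι` exhibits `M` as the spanning sub-plane-graph of `M'` obtained by
deleting the edges outside the range of `ι`: the pairing of darts into
edges is preserved, the rotation of `M` at each vertex is the one induced
by the rotation of `M'` (first return to the range of `ι`), and `M'` has
no vertices besides those of `M`.  Equivalently (both maps being plane),
`M'` arises from `M` by adding edges inside faces. -/
structure CombMap.IsEdgeSubmap (M M' : CombMap) (ι : M.D ↪ M'.D) : Prop where
  alpha_comm : ∀ d, ι (M.α d) = M'.α (ι d)
  rotation : ∀ d : M.D, ∃ k : ℕ, 0 < k ∧ ι (M.σ d) = (M'.σ ^ k) (ι d) ∧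
    ∀ j : ℕ, 0 < j → j < k → (M'.σ ^ j) (ι d) ∉ Set.range ι
  spanning : ∀ a : M'.D, ∃ d, M'.SameVertex a (ι d)

/-- The vertex of the dart `x` of `M'` is happy with respect to the set
`R` of original darts: some angle at this vertex (pair of darts
consecutive in the rotation) consists of two original darts. -/
def CombMap.HappyAt (M' : CombMap) (R : Set M'.D) (x : M'.D) : Prop :=
  ∃ a, M'.SameVertex x a ∧ a ∈ R ∧ M'.σ a ∈ R

/-!
Work with mod-2 cochains on the vertices, edges and faces of the map. For the coboundaries
`δ₀ c (uv) = c u + c v` and `δ₁ t (F) = ∑_{e ∈ ∂F} t e` we have `δ₁ ∘ δ₀ = 0`, and for a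
connected plane map `range δ₀ = ker δ₁`: the kernel of `δ₀` (constants) and the cokernel of `δ₁`
are at most one-dimensional, so Euler's formula `V - E + F = 2` makes the dimensions agree.
The edge set of `H`, as a 1-cochain, is a cocycle, since every triangle carries exactly one
matched edge and hence two edges of `H`. It is therefore `δ₀ c`, and `c` 2-colours `H`.

For the angle `(a, σ a)`, the darts `α a` and `σ a` are consecutive on a face; if both lay in `S`,
uniqueness of the matched dart of that face would make them equal, i.e. `a` a loop.
-/

open Module Submodule LinearMap

theorem Equiv.Perm.SameCycle.exists_pow_lt_of_pow_eq_one {α : Type*} [Finite α]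
    {f : Equiv.Perm α} {n : ℕ} {x y : α} (hn : 0 < n) (hf : f ^ n = 1) (h : f.SameCycle x y) :
    ∃ i < n, (f ^ i) x = y :=
  let ⟨i, hi, hxy⟩ := h.exists_pow_eq'
  ⟨i, hi.trans_le (orderOf_le_of_pow_eq_one hn hf), hxy⟩

theorem finrank_span_singleton_le_one {R V : Type*} [Semiring R] [StrongRankCondition R]
    [AddCommMonoid V] [Module R V] (v : V) : finrank R (span R {v}) ≤ 1 :=
  (finrank_span_le_card {v}).trans (by simp)

namespace CombMap

open scoped Classical

variable (M : CombMap)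

abbrev Vertex := Quotient (M.orbitSetoid M.σ)
abbrev Edge := Quotient (M.orbitSetoid M.α)
abbrev Face := Quotient (M.orbitSetoid M.φ)

def vertex (d : M.D) : M.Vertex := Quotient.mk _ d
def edge (d : M.D) : M.Edge := Quotient.mk _ d
def face (d : M.D) : M.Face := Quotient.mk _ d

variable {M}

theorem vertex_surjective : Function.Surjective M.vertex := Quotient.mk_surjective

theorem face_surjective : Function.Surjective M.face := Quotient.mk_surjective

theorem vertex_σ (d : M.D) : M.vertex (M.σ d) = M.vertex d :=
  Quotient.sound (Equiv.Perm.sameCycle_apply_left.mpr (.refl _ _))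

theorem face_φ (d : M.D) : M.face (M.φ d) = M.face d :=
  Quotient.sound (Equiv.Perm.sameCycle_apply_left.mpr (.refl _ _))

theorem φ_α (d : M.D) : M.φ (M.α d) = M.σ d := by
  simp [φ, M.α_invol]

theorem face_α (d : M.D) : M.face (M.α d) = M.face (M.σ d) := by
  rw [← φ_α, face_φ]

theorem edge_eq_edge_iff {a b : M.D} : M.edge a = M.edge b ↔ b = a ∨ b = M.α a := by
  refine ⟨fun h => ?_, ?_⟩
  · have hα : M.α ^ 2 = 1 := Equiv.ext fun d => M.α_invol d
    obtain ⟨i, hi, rfl⟩ :=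
      (Quotient.exact h : M.α.SameCycle a b).exists_pow_lt_of_pow_eq_one two_pos hα
    interval_cases i <;> simp
  · rintro (rfl | rfl)
    · rfl
    · exact Quotient.sound (Equiv.Perm.sameCycle_apply_right.mpr (.refl _ _))

theorem face_eq_face_iff (htri : M.Triangulated) {a b : M.D} :
    M.face a = M.face b ↔ b = a ∨ b = M.φ a ∨ b = M.φ (M.φ a) := by
  refine ⟨fun h => ?_, ?_⟩
  · have hφ : M.φ ^ 3 = 1 := Equiv.ext fun d => (htri d).1
    obtain ⟨i, hi, rfl⟩ :=
      (Quotient.exact h : M.φ.SameCycle a b).exists_pow_lt_of_pow_eq_one three_pos hφ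
    interval_cases i <;> simp [pow_succ]
  · rintro (rfl | rfl | rfl) <;> simp only [face_φ]

theorem Connected.apply_eq {β : Type*} (hconn : M.Connected) {h : M.D → β}
    (hσ : ∀ d, h (M.σ d) = h d) (hα : ∀ d, h (M.α d) = h d) (a b : M.D) : h a = h b := by
  induction hconn a b with
  | rel x y hxy => rcases hxy with rfl | rfl <;> simp only [hσ, hα]
  | refl => rfl
  | symm _ _ _ ih => exact ih.symm
  | trans _ _ _ _ _ ih₁ ih₂ => exact ih₁.trans ih₂

variable (M)

/- Summing over fibres counts boundary cells with multiplicity: an edge met twice along the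
boundary of a face contributes twice, i.e. not at all mod 2. -/
noncomputable def coboundary₀ : (M.Vertex → ZMod 2) →ₗ[ZMod 2] (M.Edge → ZMod 2) where
  toFun c e := ∑ d with M.edge d = e, c (M.vertex d)
  map_add' c c' := funext fun e => by simp [Finset.sum_add_distrib]
  map_smul' a c := funext fun e => by simp [Finset.mul_sum]

noncomputable def coboundary₁ : (M.Edge → ZMod 2) →ₗ[ZMod 2] (M.Face → ZMod 2) where
  toFun t f := ∑ d with M.face d = f, t (M.edge d)
  map_add' t t' := funext fun f => by simp [Finset.sum_add_distrib]
  map_smul' a t := funext fun f => by simp [Finset.mul_sum]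

variable {M}

theorem coboundary₀_apply_edge (c : M.Vertex → ZMod 2) (d : M.D) :
    M.coboundary₀ c (M.edge d) = c (M.vertex d) + c (M.vertex (M.α d)) := by
  have hfiber : ({x | M.edge x = M.edge d} : Finset M.D) = {d, M.α d} := by
    ext x
    simp [edge_eq_edge_iff, eq_comm]
  change ∑ x with M.edge x = M.edge d, c (M.vertex x) = _
  rw [hfiber, Finset.sum_pair (M.α_fpf d).symm]

theorem sum_face_φ {β : Type*} [AddCommMonoid β] (g : M.D → β) (f : M.Face) :
    ∑ d with M.face d = f, g (M.φ d) = ∑ d with M.face d = f, g d :=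
  Finset.sum_equiv M.φ (by simp [face_φ]) (fun _ _ => rfl)

theorem coboundary₁_comp_coboundary₀ : M.coboundary₁ ∘ₗ M.coboundary₀ = 0 := by
  refine LinearMap.ext fun c => funext fun f => ?_
  have hα (d : M.D) : c (M.vertex (M.α d)) = c (M.vertex (M.φ d)) := by
    rw [φ, Equiv.trans_apply, vertex_σ]
  simp only [LinearMap.comp_apply, coboundary₁, LinearMap.coe_mk, AddHom.coe_mk,
    coboundary₀_apply_edge, hα, Finset.sum_add_distrib, sum_face_φ (fun d => c (M.vertex d)),
    CharTwo.add_self_eq_zero, LinearMap.zero_apply, Pi.zero_apply]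

theorem range_coboundary₀_le_ker_coboundary₁ : range M.coboundary₀ ≤ ker M.coboundary₁ :=
  LinearMap.range_le_ker_iff.mpr coboundary₁_comp_coboundary₀

theorem ker_coboundary₀_le_span_one (hconn : M.Connected) :
    ker M.coboundary₀ ≤ span (ZMod 2) {1} := by
  intro c hc
  have hα (d : M.D) : c (M.vertex (M.α d)) = c (M.vertex d) := by
    have := congrFun (LinearMap.mem_ker.mp hc) (M.edge d)
    rw [coboundary₀_apply_edge, Pi.zero_apply, CharTwo.add_eq_zero] at this
    exact this.symm
  rcases isEmpty_or_nonempty M.D with hD | hD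
  · rw [Subsingleton.elim c 0]
    exact zero_mem _
  obtain ⟨d₀⟩ := hD
  refine mem_span_singleton.mpr ⟨c (M.vertex d₀), funext fun v => ?_⟩
  obtain ⟨d, rfl⟩ := vertex_surjective v
  simpa using hconn.apply_eq (h := fun d => c (M.vertex d)) (fun d => by rw [vertex_σ]) hα d₀ d

theorem coboundary₁_single_edge (a : M.D) :
    M.coboundary₁ (Pi.single (M.edge a) 1) =
      Pi.single (M.face a) 1 + Pi.single (M.face (M.α a)) 1 := by
  have hsingle (d : M.D) :
      (Pi.single (M.edge a) 1 : M.Edge → ZMod 2) (M.edge d) =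
        (Pi.single a 1 + Pi.single (M.α a) 1 : M.D → ZMod 2) d := by
    have hα : Function.Involutive M.α := M.α_invol
    simp only [Pi.add_apply, Pi.single_apply, edge_eq_edge_iff, eq_comm (a := a), hα.eq_iff]
    split_ifs <;> simp_all [M.α_fpf]
  funext f
  change ∑ d with M.face d = f, _ = _
  simp only [hsingle, Pi.add_apply, Finset.sum_add_distrib, Finset.sum_pi_single']
  simp [Pi.single_apply, eq_comm]

theorem range_coboundary₁_sup_span_eq_top (hconn : M.Connected) (d₀ : M.D) :
    range M.coboundary₁ ⊔ span (ZMod 2) {Pi.single (M.face d₀) 1} = ⊤ := by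
  set R := range M.coboundary₁
  have hα (d : M.D) : (Submodule.Quotient.mk (Pi.single (M.face (M.α d)) 1) : _ ⧸ R) =
      Submodule.Quotient.mk (Pi.single (M.face d) 1) := by
    have hneg (x : M.Face → ZMod 2) : -x = x := funext fun _ => ZMod.neg_eq_self_mod_two _
    rw [Submodule.Quotient.eq, sub_eq_add_neg, hneg, add_comm, ← coboundary₁_single_edge]
    exact mem_range_self _ _
  have hconst (a : M.D) : (Submodule.Quotient.mk (Pi.single (M.face a) 1) : _ ⧸ R) =
      Submodule.Quotient.mk (Pi.single (M.face d₀) 1) :=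
    hconn.apply_eq (h := fun a => (Submodule.Quotient.mk (Pi.single (M.face a) 1) : _ ⧸ R))
      (fun d => by rw [← face_α, hα]) hα a d₀
  rw [eq_top_iff, ← (Pi.basisFun (ZMod 2) M.Face).span_eq, span_le]
  rintro _ ⟨f, rfl⟩
  obtain ⟨a, rfl⟩ := face_surjective f
  simpa using add_mem (mem_sup_left ((Submodule.Quotient.eq R).mp (hconst a)))
    (mem_sup_right (mem_span_singleton_self (Pi.single (M.face d₀) (1 : ZMod 2))))

theorem card_face_le_finrank_range_coboundary₁_add_one (hconn : M.Connected) :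
    Nat.card M.Face ≤ finrank (ZMod 2) (range M.coboundary₁) + 1 := by
  rcases isEmpty_or_nonempty M.D with hD | ⟨⟨d₀⟩⟩
  · simp
  calc Nat.card M.Face = finrank (ZMod 2) (⊤ : Submodule (ZMod 2) (M.Face → ZMod 2)) := by
        simp [Nat.card_eq_fintype_card]
    _ = finrank (ZMod 2) (range M.coboundary₁ ⊔ span (ZMod 2) {Pi.single (M.face d₀) 1} :
          Submodule _ _) := by rw [range_coboundary₁_sup_span_eq_top hconn]
    _ ≤ finrank (ZMod 2) (range M.coboundary₁) + 1 :=
        (Submodule.finrank_add_le_finrank_add_finrank _ _).trans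
          (by grw [finrank_span_singleton_le_one])

theorem Connected.nC_eq_one (hconn : M.Connected) [Nonempty M.D] : M.nC = 1 := by
  rw [nC, Nat.card_eq_one_iff_unique]
  refine ⟨⟨fun x y => ?_⟩, ⟨Quotient.mk _ (Classical.arbitrary _)⟩⟩
  induction x using Quotient.ind
  induction y using Quotient.ind
  exact Quotient.sound (hconn _ _)

theorem range_coboundary₀_eq_ker_coboundary₁ (hplanar : M.Planar) (hconn : M.Connected) :
    range M.coboundary₀ = ker M.coboundary₁ := by
  rcases isEmpty_or_nonempty M.D with hD | hD
  · exact Subsingleton.elim _ _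
  have heuler : Nat.card M.Vertex + Nat.card M.Face = Nat.card M.Edge + 2 := by
    have := hplanar
    rw [Planar, hconn.nC_eq_one] at this
    change (Nat.card M.Vertex : ℤ) - Nat.card M.Edge + Nat.card M.Face = 2 * (1 : ℕ) at this
    omega
  have h₀ := finrank_range_add_finrank_ker M.coboundary₀
  have h₁ := finrank_range_add_finrank_ker M.coboundary₁
  have hker₀ := (Submodule.finrank_mono (ker_coboundary₀_le_span_one hconn)).trans
    (finrank_span_singleton_le_one _)
  have hrange₁ := card_face_le_finrank_range_coboundary₁_add_one hconn
  simp only [finrank_fintype_fun_eq_card, ← Nat.card_eq_fintype_card] at h₀ h₁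
  refine Submodule.eq_of_le_of_finrank_le range_coboundary₀_le_ker_coboundary₁ ?_
  omega

section Matching

variable {S : Set M.D}

theorem eq_of_mem_of_sameFace (hmatch : ∀ d : M.D, ∃! d' : M.D, d' ∈ S ∧ M.SameFace d d')
    {a b : M.D} (ha : a ∈ S) (hb : b ∈ S) (hab : M.SameFace a b) : a = b := by
  obtain ⟨u, -, hu⟩ := hmatch a
  exact (hu a ⟨ha, .refl _ _⟩).trans (hu b ⟨hb, hab⟩).symm

theorem notMem_or_σ_notMem (hloop : M.Loopless) (hS : ∀ d, d ∈ S ↔ M.α d ∈ S)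
    (hmatch : ∀ d : M.D, ∃! d' : M.D, d' ∈ S ∧ M.SameFace d d') (a : M.D) :
    a ∉ S ∨ M.σ a ∉ S := by
  by_contra! ⟨ha, hσa⟩
  have hface : M.SameFace (M.α a) (M.σ a) := by
    rw [SameFace, ← φ_α]
    exact Equiv.Perm.sameCycle_apply_right.mpr (.refl _ _)
  have hloopa : M.IsLoopDart a := by
    rw [IsLoopDart, eq_of_mem_of_sameFace hmatch ((hS a).mp ha) hσa hface]
    exact Equiv.Perm.sameCycle_apply_right.mpr (.refl _ _)
  exact hloop a hloopa

theorem edge_mem_image_compl_iff (hS : ∀ d, d ∈ S ↔ M.α d ∈ S) {d : M.D} :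
    M.edge d ∈ M.edge '' Sᶜ ↔ d ∉ S := by
  refine ⟨?_, fun hd => ⟨d, hd, rfl⟩⟩
  rintro ⟨x, hx, hxd⟩
  rcases edge_eq_edge_iff.mp hxd with rfl | rfl
  · exact hx
  · rwa [← hS]

theorem indicator_image_compl_mem_ker_coboundary₁ (htri : M.Triangulated) (hS : ∀ d, d ∈ S ↔ M.α d ∈ S)
    (hmatch : ∀ d : M.D, ∃! d' : M.D, d' ∈ S ∧ M.SameFace d d') :
    (M.edge '' Sᶜ).indicator 1 ∈ ker M.coboundary₁ := by
  have hw (x : M.D) :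
      (M.edge '' Sᶜ).indicator 1 (M.edge x) = if x ∈ S then (0 : ZMod 2) else 1 := by
    by_cases hx : x ∈ S <;> simp [edge_mem_image_compl_iff hS, hx]
  have hstep (x : M.D) : M.SameFace x (M.φ x) := Equiv.Perm.sameCycle_apply_right.mpr (.refl _ _)
  rw [LinearMap.mem_ker]
  funext f
  obtain ⟨d, rfl⟩ := face_surjective f
  obtain ⟨s, ⟨hs, hds⟩, -⟩ := hmatch d
  have hφs : M.φ s ∉ S := fun h => (htri s).2 (eq_of_mem_of_sameFace hmatch hs h (hstep s)).symm
  have hφφs : M.φ (M.φ s) ∉ S := fun h => (htri s).2 <| by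
    have := congrArg M.φ (eq_of_mem_of_sameFace hmatch hs h ((hstep s).trans (hstep _)))
    rwa [(htri s).1] at this
  have hfiber : ({x | M.face x = M.face s} : Finset M.D) = {s, M.φ s, M.φ (M.φ s)} := by
    ext x
    simp only [Finset.mem_filter, Finset.mem_univ, true_and, Finset.mem_insert,
      Finset.mem_singleton]
    rw [eq_comm, face_eq_face_iff htri]
  change ∑ x with M.face x = M.face d, _ = 0
  rw [show M.face d = M.face s from Quotient.sound hds, hfiber,
    Finset.sum_insert (by simp only [Finset.mem_insert, Finset.mem_singleton]; grind),
    Finset.sum_pair fun h => (htri s).2 (M.φ.injective h).symm]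
  simp only [hw, hs, hφs, hφφs, if_true, if_false]
  rfl

theorem exists_coloring_of_coboundary₀_eq (hS : ∀ d, d ∈ S ↔ M.α d ∈ S)
    {c : M.Vertex → ZMod 2} (hc : M.coboundary₀ c = (M.edge '' Sᶜ).indicator 1) :
    ∃ col : M.D → Bool, (∀ d, col (M.σ d) = col d) ∧ ∀ d ∉ S, col (M.α d) ≠ col d := by
  refine ⟨fun d => c (M.vertex d) = 1, fun d => by simp only [vertex_σ], fun d hd => ?_⟩
  have hsum : c (M.vertex d) + c (M.vertex (M.α d)) = 1 := by
    rw [← coboundary₀_apply_edge, hc,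
      Set.indicator_of_mem ((edge_mem_image_compl_iff hS).mpr hd), Pi.one_apply]
  have hbool : ∀ x y : ZMod 2, x + y = 1 → decide (y = 1) ≠ decide (x = 1) := by decide
  exact hbool _ _ hsum

end Matching

end CombMap

/-- Let `G` be a plane triangulated multigraph without
loops, and let `S` be a set of edges of `G` (a set of darts closed under
the edge-involution) whose dual edges form a perfect matching of the
dual graph `G*`, i.e. every face of `G` carries exactly one dart of `S`.
Then the subgraph `H = (V(G), E(G) \ S)` is bipartite (it admits a
proper 2-coloring `c` of the vertices of `G`, constant on the rotation
at each vertex, separating the endpoints of each edge not in `S`), and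
for every angle of `G` (a pair of darts `a`, `σ a` consecutive in the
rotation at a vertex) at least one of its two edges belongs to `H`. -/
theorem dual_matching_gives_bipartite_angle_cover (M : CombMap)
    (hplanar : M.Planar) (hconn : M.Connected)
    (htri : M.Triangulated) (hloop : M.Loopless)
    (S : Set M.D) (hSedge : ∀ d, d ∈ S ↔ M.α d ∈ S)
    (hmatch : ∀ d : M.D, ∃! d' : M.D, d' ∈ S ∧ M.SameFace d d') :
    (∃ c : M.D → Bool, (∀ d, c (M.σ d) = c d) ∧
        ∀ d ∉ S, c (M.α d) ≠ c d) ∧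
      ∀ a : M.D, a ∉ S ∨ M.σ a ∉ S := by
  obtain ⟨c, hc⟩ : (M.edge '' Sᶜ).indicator 1 ∈ range M.coboundary₀ := by
    rw [M.range_coboundary₀_eq_ker_coboundary₁ hplanar hconn]
    exact M.indicator_image_compl_mem_ker_coboundary₁ htri hSedge hmatch
  exact ⟨M.exists_coloring_of_coboundary₀_eq hSedge hc, M.notMem_or_σ_notMem hloop hSedge hmatch⟩
end

section
/- A plane multigraph in which every face has even degree is bipartite. -/
open Equiv Equiv.Perm

namespace Setoid

variable {α : Type*} (s : Setoid α) {a b : α}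

def merge (a b : α) : Setoid α where
  r z w := s z w ∨ (s z a ∧ s b w) ∨ (s z b ∧ s a w)
  iseqv := by
    have hs : ∀ {x y}, s x y → s y x := s.symm'
    have ht : ∀ {x y z}, s x y → s y z → s x z := s.trans'
    exact ⟨fun z => Or.inl (s.refl' z), fun h => by grind, fun h h' => by grind⟩

theorem le_merge : s ≤ s.merge a b := fun _ _ h => Or.inl h

theorem merge_rel : s.merge a b a b := Or.inr (Or.inl ⟨s.refl' a, s.refl' b⟩)

theorem merge_le {t : Setoid α} (hst : s ≤ t) (hab : t a b) : s.merge a b ≤ t := by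
  rintro z w (h | ⟨h₁, h₂⟩ | ⟨h₁, h₂⟩)
  · exact hst h
  · exact t.trans' (hst h₁) (t.trans' hab (hst h₂))
  · exact t.trans' (hst h₁) (t.trans' (t.symm' hab) (hst h₂))

theorem merge_eq_self (hab : s a b) : s.merge a b = s :=
  le_antisymm (s.merge_le le_rfl hab) s.le_merge

theorem card_quotient_merge_add_one [Finite α] (hab : ¬ s a b) :
    Nat.card (Quotient (s.merge a b)) + 1 = Nat.card (Quotient s) := by
  classical
  let f : {q : Quotient s // q ≠ ⟦b⟧} → Quotient (s.merge a b) :=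
    fun q => map_of_le s.le_merge q.1
  have hf : Function.Bijective f := by
    constructor
    · rintro ⟨q, hq⟩ ⟨q', hq'⟩ h
      induction q using Quotient.inductionOn
      induction q' using Quotient.inductionOn
      rcases Quotient.exact h with h | ⟨-, h⟩ | ⟨h, -⟩
      · exact Subtype.ext (Quotient.sound h)
      · exact absurd (Quotient.sound (s.symm' h)) hq'
      · exact absurd (Quotient.sound h) hq
    · intro q
      induction q using Quotient.inductionOn with | h z => ?_
      by_cases hz : s z b
      · exact ⟨⟨⟦a⟧, fun h => hab (Quotient.exact h)⟩,
          Quotient.sound (Or.inr (Or.inl ⟨s.refl' a, s.symm' hz⟩))⟩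
      · exact ⟨⟨⟦z⟧, fun h => hz (Quotient.exact h)⟩, rfl⟩
  rw [← Nat.card_eq_of_bijective f hf, ← Finite.card_option,
    Nat.card_congr (optionSubtypeNe _)]

theorem rel_swap_apply [DecidableEq α] (hab : s a b) (z : α) : s z (swap a b z) := by
  rcases eq_or_ne z a with rfl | hza
  · simpa using hab
  rcases eq_or_ne z b with rfl | hzb
  · simpa using s.symm' hab
  · rw [swap_apply_of_ne_of_ne hza hzb]

end Setoid

theorem Setoid.exists_xor_eq_xor_of_rel {D : Type*} (s : Setoid (D × Bool))
    (hflip : ∀ {d d' x x'}, s (d, x) (d', x') → s (d, !x) (d', !x'))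
    (hsep : ∀ d, ¬ s (d, false) (d, true)) :
    ∃ c : D → Bool, ∀ {d d' x x'}, s (d, x) (d', x') → xor x (c d) = xor x' (c d') := by
  classical
  -- The two classes over `d` form an unordered pair that only depends on the class of any
  -- `(d, x)`; choosing one element of each pair selects the sheets consistently.
  let fiber : D → Sym2 (Quotient s) := fun d => s(⟦(d, false)⟧, ⟦(d, true)⟧)
  have hfiber {d d' x x'} (h : s (d, x) (d', x')) : fiber d = fiber d' := by
    have h' := hflip h
    cases x <;> cases x' <;> simp only [Bool.not_false, Bool.not_true] at h' <;>
      simp only [fiber, Quotient.sound h, Quotient.sound h', Sym2.eq_swap]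
  let c d := decide ((fiber d).out.1 = ⟦(d, true)⟧)
  have hc d : (fiber d).out.1 = ⟦(d, c d)⟧ := by
    rcases Sym2.mem_iff.1 (Sym2.out_fst_mem (fiber d)) with h | h <;>
      by_cases e : (⟦(d, false)⟧ : Quotient s) = ⟦(d, true)⟧ <;> simp [c, h, e]
  have hsheet {d x x'} (h : s (d, x) (d, x')) : x = x' := by
    cases x <;> cases x' <;> simp_all [hsep d, fun h => hsep d (s.symm' h)]
  refine ⟨c, fun {d d' x x'} h => ?_⟩
  have hcc : s (d, c d) (d', c d') := Quotient.exact ((hc d).symm.trans (hfiber h ▸ hc d'))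
  obtain hx | hx : x = c d ∨ x = !c d := by cases x <;> cases c d <;> simp
  · have hx' := hsheet (s.trans' (s.symm' h) (by rw [hx]; exact hcc))
    simp [hx, hx']
  · have hx' := hsheet (s.trans' (s.symm' h) (by rw [hx]; exact hflip hcc))
    simp [hx, hx']

namespace Equiv.Perm

variable {D : Type*}

/-- The number of cycles of `p`, fixed points included. -/
noncomputable def numOrbits (p : Perm D) : ℕ := Nat.card (Quotient (SameCycle.setoid p))

def componentSetoid (x y : Perm D) : Setoid D :=
  Relation.EqvGen.setoid fun a b => b = x a ∨ b = y a

noncomputable def numComponents (x y : Perm D) : ℕ := Nat.card (Quotient (componentSetoid x y))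

theorem sameCycleSetoid_le [Finite D] {p : Perm D} {s : Setoid D} (h : ∀ z, s z (p z)) :
    SameCycle.setoid p ≤ s := by
  rintro z _ hz
  obtain ⟨k, -, rfl⟩ := hz.exists_pow_eq'
  clear hz
  induction k with
  | zero => exact s.refl' z
  | succ k ih => rw [pow_succ', mul_apply]; exact s.trans' ih (h _)

theorem componentSetoid_le {x y : Perm D} {s : Setoid D} (hx : ∀ z, s z (x z))
    (hy : ∀ z, s z (y z)) : componentSetoid x y ≤ s :=
  Setoid.eqvGen_le fun a _ h => h.elim (· ▸ hx a) (· ▸ hy a)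

theorem componentSetoid_left (x y : Perm D) (z : D) : componentSetoid x y z (x z) :=
  Relation.EqvGen.rel _ _ (Or.inl rfl)

theorem componentSetoid_right (x y : Perm D) (z : D) : componentSetoid x y z (y z) :=
  Relation.EqvGen.rel _ _ (Or.inr rfl)

theorem sameCycleSetoid_mul_le [Finite D] (x y : Perm D) :
    SameCycle.setoid (x * y) ≤ componentSetoid x y :=
  sameCycleSetoid_le fun z =>
    (componentSetoid x y).trans' (componentSetoid_right x y z) (componentSetoid_left x y _)

theorem numComponents_one [Finite D] (x : Perm D) : numComponents x 1 = numOrbits x := by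
  rw [numComponents, le_antisymm
    (componentSetoid_le (fun z => (SameCycle.refl x z).apply_right) (SameCycle.refl x))
    (sameCycleSetoid_le (componentSetoid_left x 1)), numOrbits]

theorem numOrbits_one : numOrbits (1 : Perm D) = Nat.card D := by
  have : SameCycle.setoid (1 : Perm D) = ⊥ := Setoid.ext fun _ _ => sameCycle_one
  rw [numOrbits, this, Nat.card_congr Setoid.quotientBotEquiv]

theorem numOrbits_le_card [Finite D] (p : Perm D) : numOrbits p ≤ Nat.card D :=
  Nat.card_le_card_of_surjective _ Quotient.mk_surjective

section Swap

variable [DecidableEq D] {p : Perm D} {u v : D}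

theorem swap_mul_pow_succ_apply {k : ℕ}
    (h : ∀ j, 0 < j → j ≤ k → (p ^ j) u ≠ u ∧ (p ^ j) u ≠ v) :
    ((swap u v * p) ^ (k + 1)) u = swap u v ((p ^ (k + 1)) u) := by
  induction k with
  | zero => simp
  | succ k ih =>
    have hk := h (k + 1) k.succ_pos le_rfl
    rw [pow_succ', mul_apply, ih fun j hj hjk => h j hj (hjk.trans k.le_succ), mul_apply,
      swap_apply_of_ne_of_ne hk.1 hk.2, ← mul_apply p, ← pow_succ']

theorem sameCycle_swap_mul_of_not_sameCycle [Finite D] (h : ¬ p.SameCycle u v) :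
    (swap u v * p).SameCycle u v := by
  -- The `p`-orbit of `u` never meets `v`, so the orbit of `u` under `swap u v * p` follows it
  -- until it returns to `u`, where the swap sends it to `v` instead.
  have hpos := MulAction.period_pos_of_orderOf_pos (orderOf_pos p) u
  obtain ⟨k, hk⟩ := Nat.exists_eq_add_one_of_ne_zero hpos.ne'
  have hpath := swap_mul_pow_succ_apply (u := u) (v := v) (k := k) fun j hj hjk =>
    ⟨MulAction.pow_smul_ne_of_lt_period (m := p) (a := u) hj (by omega),
      fun e => h (e ▸ sameCycle_pow_right.2 (SameCycle.refl p u))⟩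
  have hper : (p ^ (k + 1)) u = u := hk ▸ MulAction.pow_period_smul p u
  rw [hper, swap_apply_left] at hpath
  exact ⟨(k + 1 : ℕ), by rw [zpow_natCast, hpath]⟩

theorem not_sameCycle_swap_mul [Finite D] (huv : u ≠ v) (h : p.SameCycle u v) :
    ¬ (swap u v * p).SameCycle u v := by
  classical
  -- Up to the first time `m` at which its `p`-orbit reaches `v`, the orbit of `u` under
  -- `swap u v * p` follows the `p`-orbit; at time `m` it closes up without having met `v`.
  have hex : ∃ m, (p ^ m) u = v := let ⟨i, _, hi⟩ := h.exists_pow_eq'; ⟨i, hi⟩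
  set m := Nat.find hex
  have hm : (p ^ m) u = v := Nat.find_spec hex
  have hm0 : m ≠ 0 := fun h0 => huv (by rw [← hm, h0, pow_zero, one_apply])
  have hpath : ∀ j, 0 < j → j < m → (p ^ j) u ≠ u ∧ (p ^ j) u ≠ v := fun j hj hjm =>
    ⟨fun e => Nat.find_min hex (show m - j < m by omega)
      (by rw [← e, ← mul_apply, ← pow_add, Nat.sub_add_cancel hjm.le, hm]),
      Nat.find_min hex hjm⟩
  have hq : ∀ j, 0 < j → j ≤ m → ((swap u v * p) ^ j) u = swap u v ((p ^ j) u) := by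
    rintro (_ | j) hj hjm
    · omega
    · exact swap_mul_pow_succ_apply fun i hi hij => hpath i hi (by omega)
  have hper : ((swap u v * p) ^ m) u = u := by
    rw [hq m (Nat.pos_of_ne_zero hm0) le_rfl, hm, swap_apply_right]
  rintro hc
  obtain ⟨i, -, hi⟩ := hc.exists_pow_eq'
  rw [← Nat.mod_add_div i m, pow_add, mul_apply, pow_mul,
    pow_apply_eq_self_of_apply_eq_self hper] at hi
  rcases Nat.eq_zero_or_pos (i % m) with h0 | hpos
  · exact huv (by rwa [h0, pow_zero, one_apply] at hi)
  · have hlt := Nat.mod_lt i (Nat.pos_of_ne_zero hm0)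
    rw [hq _ hpos hlt.le, swap_apply_of_ne_of_ne (hpath _ hpos hlt).1 (hpath _ hpos hlt).2] at hi
    exact (hpath _ hpos hlt).2 hi

theorem sameCycleSetoid_swap_mul [Finite D] (h : ¬ p.SameCycle u v) :
    SameCycle.setoid (swap u v * p) = (SameCycle.setoid p).merge u v := by
  refine le_antisymm (sameCycleSetoid_le fun z => ?_)
    (Setoid.merge_le _ (sameCycleSetoid_le fun z => ?_) (sameCycle_swap_mul_of_not_sameCycle h))
  · exact Setoid.trans' _ (Setoid.le_merge _ (SameCycle.refl p z).apply_right)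
      (Setoid.rel_swap_apply _ (Setoid.merge_rel _) _)
  · conv_rhs => rw [← swap_mul_self_mul u v p, mul_apply]
    exact Setoid.trans' _ (SameCycle.refl _ z).apply_right
      (Setoid.rel_swap_apply (SameCycle.setoid _) (sameCycle_swap_mul_of_not_sameCycle h) _)

theorem numOrbits_swap_mul_add_one [Finite D] (h : ¬ p.SameCycle u v) :
    numOrbits (swap u v * p) + 1 = numOrbits p := by
  rw [numOrbits, sameCycleSetoid_swap_mul h]
  exact Setoid.card_quotient_merge_add_one _ h

theorem numOrbits_swap_mul_of_sameCycle [Finite D] (huv : u ≠ v) (h : p.SameCycle u v) :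
    numOrbits (swap u v * p) = numOrbits p + 1 := by
  simpa [swap_mul_self_mul, eq_comm] using numOrbits_swap_mul_add_one (not_sameCycle_swap_mul huv h)

theorem numOrbits_swap_mul_le [Finite D] (p : Perm D) (u v : D) :
    numOrbits (swap u v * p) ≤ numOrbits p + 1 := by
  by_cases h : p.SameCycle u v
  · rcases eq_or_ne u v with rfl | huv
    · simp [swap_self, ← one_def]
    · exact (numOrbits_swap_mul_of_sameCycle huv h).le
  · have := numOrbits_swap_mul_add_one h
    omega

theorem componentSetoid_eq_merge (x y : Perm D) (a : D) :
    componentSetoid x y = (componentSetoid x (swap a (y a) * y)).merge a (y a) := by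
  have hR := componentSetoid_right x y a
  refine le_antisymm (componentSetoid_le (fun z => Setoid.le_merge _ (componentSetoid_left _ _ z))
    fun z => ?_) (Setoid.merge_le _ (componentSetoid_le (componentSetoid_left x y) fun z => ?_) hR)
  · conv_rhs => rw [← swap_mul_self_mul a (y a) y, mul_apply]
    exact Setoid.trans' _ (Setoid.le_merge _ (componentSetoid_right _ _ z))
      (Setoid.rel_swap_apply _ (Setoid.merge_rel _) _)
  · exact Setoid.trans' _ (componentSetoid_right x y z) (Setoid.rel_swap_apply _ hR _)

/-- Euler's inequality: the hypermap `(x, y)` has nonnegative genus. -/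
theorem numOrbits_add_numOrbits_add_numOrbits_mul_le [Finite D] (x y : Perm D) :
    numOrbits x + numOrbits y + numOrbits (x * y) ≤ Nat.card D + 2 * numComponents x y := by
  by_cases hy : y = 1
  · subst hy
    rw [mul_one, numOrbits_one, numComponents_one]
    omega
  obtain ⟨a, ha⟩ : ∃ a, y a ≠ a := by
    by_contra! h
    exact hy (Equiv.ext h)
  set b := y a
  set y' := swap a b * y
  have hy' : numOrbits y' = numOrbits y + 1 :=
    numOrbits_swap_mul_of_sameCycle ha.symm (SameCycle.refl y a).apply_right
  have hxy : x * y = swap (x a) (x b) * (x * y') := by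
    rw [swap_apply_apply]
    simp [y', mul_assoc]
  have hcomp : componentSetoid x y = (componentSetoid x y').merge a b :=
    componentSetoid_eq_merge x y a
  have ih := numOrbits_add_numOrbits_add_numOrbits_mul_le x y'
  -- Either `a` and `b` stay connected in `(x, y')` and the components are unchanged, or they
  -- are separated, and then `x a` and `x b` lie on different cycles of `x * y'`.
  by_cases hab : componentSetoid x y' a b
  · have hc : numComponents x y = numComponents x y' := by
      rw [numComponents, hcomp, Setoid.merge_eq_self _ hab, numComponents]
    have := numOrbits_swap_mul_le (x * y') (x a) (x b)
    rw [← hxy] at this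
    omega
  · have hc : numComponents x y + 1 = numComponents x y' := by
      rw [numComponents, hcomp]
      exact Setoid.card_quotient_merge_add_one _ hab
    have hxab : ¬ (x * y').SameCycle (x a) (x b) := fun h =>
      hab (Setoid.trans' _ (componentSetoid_left x y' a) (Setoid.trans' _
        (sameCycleSetoid_mul_le x y' h) (Setoid.symm' _ (componentSetoid_left x y' b))))
    have := numOrbits_swap_mul_add_one hxab
    rw [← hxy] at this
    omega
termination_by Nat.card D - numOrbits y
decreasing_by
  change Nat.card D - numOrbits y' < _
  have := numOrbits_le_card y'
  omega

end Swap

section Products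

variable {B : Type*}

theorem prodCongr_pow (f : Perm D) (g : Perm B) (k : ℕ) :
    prodCongr f g ^ k = prodCongr (f ^ k) (g ^ k) := by
  induction k with
  | zero => rfl
  | succ k ih => rw [pow_succ, ih, pow_succ, pow_succ]; rfl

theorem sameCycle_prodCongr_refl_iff [Finite D] [Finite B] {f : Perm D} {u v : D × B} :
    SameCycle (prodCongr f (Equiv.refl B)) u v ↔ f.SameCycle u.1 v.1 ∧ u.2 = v.2 := by
  constructor
  · intro h
    obtain ⟨k, -, rfl⟩ := h.exists_pow_eq'
    rw [prodCongr_pow]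
    exact ⟨sameCycle_pow_right.2 (SameCycle.refl f u.1), by simp [← one_def]⟩
  · rintro ⟨h, he⟩
    obtain ⟨k, -, hk⟩ := h.exists_pow_eq'
    refine ⟨k, Prod.ext ?_ ?_⟩ <;> simp [prodCongr_pow, ← one_def, hk, he]

theorem numOrbits_prodCongr_refl [Finite D] [Finite B] (f : Perm D) :
    numOrbits (prodCongr f (Equiv.refl B)) = numOrbits f * Nat.card B := by
  have : SameCycle.setoid (prodCongr f (Equiv.refl B)) = (SameCycle.setoid f).prod ⊥ :=
    Setoid.ext fun _ _ => sameCycle_prodCongr_refl_iff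
  rw [numOrbits, this, ← Nat.card_congr (Setoid.prodQuotientEquiv _ _), Nat.card_prod,
    Nat.card_congr Setoid.quotientBotEquiv, numOrbits]

theorem numOrbits_conj (g p : Perm D) : numOrbits (g * p * g⁻¹) = numOrbits p :=
  Nat.card_congr (Quotient.congr (g⁻¹ : Perm D) fun _ _ => sameCycle_conj)

theorem card_sameCycle_eq_period [Finite D] (f : Perm D) (d : D) :
    Nat.card {d' // f.SameCycle d d'} = MulAction.period f d := by
  have e : {d' // f.SameCycle d d'} ≃ MulAction.orbit (Subgroup.zpowers f) d :=
    Equiv.subtypeEquivRight fun d' => by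
      simp only [MulAction.mem_orbit_iff, Subgroup.exists_zpowers]; rfl
  rw [Nat.card_congr (e.trans (MulAction.orbitZPowersEquiv f d)), Nat.card_zmod,
    MulAction.period_eq_minimalPeriod]

theorem not_sameCycle_prodCongr_boolNot [Finite D] {f : Perm D}
    (heven : ∀ d, Even (Nat.card {d' // f.SameCycle d d'})) (d : D) :
    ¬ SameCycle (prodCongr f boolNot) (d, false) (d, true) := by
  intro h
  obtain ⟨k, -, hk⟩ := h.exists_pow_eq'
  simp only [prodCongr_pow, prodCongr_apply, Prod.map_apply, Prod.mk.injEq] at hk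
  obtain ⟨hf, hb⟩ := hk
  obtain ⟨j, rfl⟩ : Even k :=
    (MulAction.pow_smul_eq_iff_period_dvd.1 hf).even (card_sameCycle_eq_period f d ▸ heven d)
  have hsq : boolNot ^ 2 = 1 := by ext b; simp [sq]
  rw [← two_mul, pow_mul, hsq, one_pow] at hb
  exact Bool.false_ne_true hb

theorem exists_apply_eq_not_of_even [Finite D] {f : Perm D}
    (heven : ∀ d, Even (Nat.card {d' // f.SameCycle d d'})) :
    ∃ c : D → Bool, ∀ d, c (f d) = !c d := by
  set τ : Perm (D × Bool) := prodCongr (Equiv.refl D) boolNot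
  have hτ : τ * prodCongr f boolNot * τ⁻¹ = prodCongr f boolNot := by
    ext ⟨d, b⟩ <;> simp [τ]
  have hflip {d d' x x'} (h : SameCycle (prodCongr f boolNot) (d, x) (d', x')) :
      SameCycle (prodCongr f boolNot) (d, !x) (d', !x') := by
    rw [← hτ, sameCycle_conj]
    simpa [τ] using h
  obtain ⟨c, hc⟩ := Setoid.exists_xor_eq_xor_of_rel (SameCycle.setoid _) hflip
    (not_sameCycle_prodCongr_boolNot heven)
  refine ⟨c, fun d => ?_⟩
  have := hc (x := false) (x' := true) (SameCycle.refl (prodCongr f boolNot) (d, false)).apply_right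
  simp only [Bool.false_xor, Bool.true_xor] at this
  simp [this]

theorem numOrbits_prodCongr_boolNot [Finite D] {f : Perm D}
    (heven : ∀ d, Even (Nat.card {d' // f.SameCycle d d'})) :
    numOrbits (prodCongr f boolNot) = 2 * numOrbits f := by
  obtain ⟨c, hc⟩ := exists_apply_eq_not_of_even heven
  let Φ : Perm (D × Bool) :=
    ⟨fun u => (u.1, xor u.2 (c u.1)), fun u => (u.1, xor u.2 (c u.1)), fun u => by simp,
      fun u => by simp⟩
  have hΦ : Φ * prodCongr f (Equiv.refl Bool) * Φ⁻¹ = prodCongr f boolNot := by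
    ext ⟨d, b⟩ <;> simp [Φ, hc, Perm.inv_def]
  rw [← hΦ, numOrbits_conj, numOrbits_prodCongr_refl, Nat.card_eq_fintype_card,
    Fintype.card_bool, mul_comm]

end Products

end Equiv.Perm

namespace CombMap

variable (M : CombMap)

theorem two_mul_nE : 2 * M.nE = Nat.card M.D := by
  have hsq : M.α ^ 2 = 1 := by ext d; rw [sq, mul_apply, M.α_invol, one_apply]
  have hpair {d d'} (h : M.α.SameCycle d d') : d' = d ∨ d' = M.α d := by
    obtain ⟨k, -, rfl⟩ := h.exists_pow_eq'
    obtain ⟨j, rfl | rfl⟩ := Nat.even_or_odd' k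
    · left; rw [pow_mul, hsq, one_pow, one_apply]
    · right; rw [pow_succ, pow_mul, hsq, one_pow, one_mul]
  let s := M.orbitSetoid M.α
  let g : Quotient s × Bool → M.D := fun p => cond p.2 p.1.out (M.α p.1.out)
  have hg p : Quotient.mk s (g p) = p.1 := by
    obtain ⟨q, _ | _⟩ := p
    · exact (Quotient.sound (SameCycle.refl _ _).apply_left).trans q.out_eq
    · exact q.out_eq
  have hbij : Function.Bijective g := by
    refine ⟨fun p p' h => ?_, fun d => ?_⟩
    · have hq : p.1 = p'.1 := (hg p).symm.trans (h ▸ hg p')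
      obtain ⟨q, x⟩ := p
      obtain ⟨q', x'⟩ := p'
      subst hq
      cases x <;> cases x'
      exacts [rfl, absurd h (M.α_fpf _), absurd h.symm (M.α_fpf _), rfl]
    · rcases hpair (Quotient.exact (Quotient.out_eq (Quotient.mk s d))) with h | h
      exacts [⟨(_, true), h.symm⟩, ⟨(_, false), h.symm⟩]
  rw [← Nat.card_eq_of_bijective g hbij, Nat.card_prod, Nat.card_eq_fintype_card (α := Bool),
    Fintype.card_bool, mul_comm]
  rfl

theorem eulerChar_le : (M.nV : ℤ) - M.nE + M.nF ≤ 2 * M.nC := by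
  have h := numOrbits_add_numOrbits_add_numOrbits_mul_le M.σ M.α
  have hE := M.two_mul_nE
  change M.nV + M.nE + M.nF ≤ Nat.card M.D + 2 * M.nC at h
  omega

def doubleCover : CombMap where
  D := M.D × Bool
  σ := prodCongr M.σ (Equiv.refl Bool)
  α := prodCongr M.α boolNot
  α_invol d := Prod.ext (M.α_invol d.1) (Bool.not_not d.2)
  α_fpf d h := M.α_fpf d.1 (congrArg Prod.fst h)

theorem doubleCover_reach_flip {d d' : M.D} {x x' : Bool}
    (h : M.doubleCover.Reach (d, x) (d', x')) : M.doubleCover.Reach (d, !x) (d', !x') := by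
  refine Setoid.eqvGen_le (s := M.doubleCover.reachSetoid.comap fun u => (u.1, !u.2))
    (fun u v huv => ?_) h
  rcases huv with rfl | rfl
  exacts [.rel _ _ (Or.inl rfl), .rel _ _ (Or.inr rfl)]

theorem exists_doubleCover_reach {a b : M.D} (h : M.Reach a b) (x : Bool) :
    ∃ y, M.doubleCover.Reach (a, x) (b, y) := by
  induction h generalizing x with
  | rel a b hab =>
    rcases hab with rfl | rfl
    exacts [⟨x, .rel _ _ (Or.inl rfl)⟩, ⟨!x, .rel _ _ (Or.inr rfl)⟩]
  | refl a => exact ⟨x, .refl _⟩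
  | symm a b _ ih =>
    obtain ⟨y, hy⟩ := ih x
    refine ⟨y, ?_⟩
    rcases Bool.eq_or_eq_not y x with rfl | rfl
    · exact hy.symm
    · have := M.doubleCover_reach_flip hy
      rw [Bool.not_not] at this
      exact .symm _ _ this
  | trans a b c _ _ ih₁ ih₂ =>
    obtain ⟨y, hy⟩ := ih₁ x
    obtain ⟨z, hz⟩ := ih₂ y
    exact ⟨z, hy.trans _ _ _ hz⟩

theorem nV_doubleCover : M.doubleCover.nV = 2 * M.nV := by
  change numOrbits (prodCongr M.σ (Equiv.refl Bool)) = 2 * numOrbits M.σ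
  rw [numOrbits_prodCongr_refl, Nat.card_eq_fintype_card, Fintype.card_bool, mul_comm]

theorem nE_doubleCover : M.doubleCover.nE = 2 * M.nE := by
  have h := M.doubleCover.two_mul_nE
  have hE := M.two_mul_nE
  change 2 * M.doubleCover.nE = Nat.card (M.D × Bool) at h
  rw [Nat.card_prod, Nat.card_eq_fintype_card (α := Bool), Fintype.card_bool] at h
  omega

theorem nF_doubleCover (heven : ∀ d : M.D, Even (Nat.card {d' : M.D // M.SameFace d d'})) :
    M.doubleCover.nF = 2 * M.nF := by
  have hφ : M.doubleCover.φ = prodCongr M.φ boolNot := by ext; rfl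
  change numOrbits M.doubleCover.φ = 2 * numOrbits M.φ
  rw [hφ]
  exact numOrbits_prodCongr_boolNot heven

theorem nC_doubleCover_lt {d₀ : M.D} (h : M.doubleCover.Reach (d₀, false) (d₀, true)) :
    M.doubleCover.nC < 2 * M.nC := by
  classical
  -- Lift each component of `M` through a representative dart; by `h`, the two lifts of the
  -- component of `d₀` coincide.
  let F : Quotient M.reachSetoid × Bool → Quotient M.doubleCover.reachSetoid :=
    fun p => Quotient.mk _ (p.1.out, p.2)
  have hsurj : Function.Surjective F := by
    rintro ⟨d, x⟩
    obtain ⟨y, hy⟩ := M.exists_doubleCover_reach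
      (M.reachSetoid.symm' (Quotient.exact (Quotient.out_eq (Quotient.mk M.reachSetoid d)))) x
    exact ⟨(Quotient.mk _ d, y), Quotient.sound (M.doubleCover.reachSetoid.symm' hy)⟩
  have hninj : ¬ Function.Injective F := by
    intro hinj
    set r := (Quotient.mk M.reachSetoid d₀).out
    obtain ⟨y, hy⟩ := M.exists_doubleCover_reach
      (Quotient.exact (Quotient.out_eq (Quotient.mk M.reachSetoid d₀))) false
    have hyy : M.doubleCover.Reach (d₀, y) (d₀, !y) := by
      cases y
      exacts [h, .symm _ _ h]
    have hr : M.doubleCover.Reach (r, false) (r, true) :=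
      hy.trans _ _ _ (hyy.trans _ _ _ (.symm _ _ (M.doubleCover_reach_flip hy)))
    exact Bool.false_ne_true (congrArg Prod.snd (hinj (a₁ := (Quotient.mk _ d₀, false))
      (a₂ := (Quotient.mk _ d₀, true)) (Quotient.sound hr)))
  have := Fintype.card_lt_of_surjective_not_injective F hsurj hninj
  rw [← Nat.card_eq_fintype_card, ← Nat.card_eq_fintype_card, Nat.card_prod,
    Nat.card_eq_fintype_card (α := Bool), Fintype.card_bool] at this
  exact this.trans_eq (mul_comm _ _)

theorem not_doubleCover_reach (hplanar : M.Planar)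
    (heven : ∀ d : M.D, Even (Nat.card {d' : M.D // M.SameFace d d'})) (d : M.D) :
    ¬ M.doubleCover.Reach (d, false) (d, true) := by
  intro h
  have hχ := M.doubleCover.eulerChar_le
  rw [nV_doubleCover, nE_doubleCover, nF_doubleCover _ heven] at hχ
  have hlt := M.nC_doubleCover_lt h
  unfold Planar at hplanar
  push_cast at hχ
  omega

end CombMap

/-- A plane multigraph in which every face has even degree
(the boundary walk of every face has even length) is bipartite: there is
a 2-coloring of the vertices (a `Bool`-valued function on darts, constant
on the rotation at each vertex) such that the two endpoints of every edge
receive different colors. -/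
theorem bipartite_of_even_faces (M : CombMap) (hplanar : M.Planar)
    (heven : ∀ d : M.D, Even (Nat.card {d' : M.D // M.SameFace d d'})) :
    ∃ c : M.D → Bool, (∀ d, c (M.σ d) = c d) ∧ ∀ d, c (M.α d) ≠ c d := by
  obtain ⟨c, hc⟩ := Setoid.exists_xor_eq_xor_of_rel M.doubleCover.reachSetoid
    M.doubleCover_reach_flip (M.not_doubleCover_reach hplanar heven)
  refine ⟨c, fun d => ?_, fun d => ?_⟩
  · have := hc (d := d) (x := false) (x' := false) (.rel _ _ (Or.inl rfl))
    simpa using this.symm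
  · have := hc (d := d) (x := false) (x' := true) (.rel _ _ (Or.inr rfl))
    simp only [Bool.false_xor, Bool.true_xor] at this
    simp [this]
end

section
/- Let C be a cycle of odd length d ≥ 5 drawn in the plane. In any plane triangulation obtained from C by adding edges, some vertex of C is unhappy, i.e., there is no triangular face both of whose boundary edges at that vertex are edges of C. -/
/-- The plane combinatorial map of a cycle of length `n`: vertices are
`ZMod n`, each vertex `i` carries the dart `(i, true)` of the edge
towards `i+1` and the dart `(i, false)` of the edge towards `i-1`. -/
def cycleMap (n : ℕ) [NeZero n] : CombMap where
  D := ZMod n × Bool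
  σ := ⟨fun p => (p.1, !p.2), fun p => (p.1, !p.2),
        by intro p; simp, by intro p; simp⟩
  α := ⟨fun p => if p.2 then (p.1 + 1, false) else (p.1 - 1, true),
        fun p => if p.2 then (p.1 + 1, false) else (p.1 - 1, true),
        by rintro ⟨i, b⟩; cases b <;> simp,
        by rintro ⟨i, b⟩; cases b <;> simp⟩
  α_invol := by rintro ⟨i, b⟩; cases b <;> simp
  α_fpf := by rintro ⟨i, b⟩; cases b <;> simp

/-! At a vertex `i` of the cycle the two darts `(i, false)` and `(i, true)` span two angles, one on
each side of the cycle; `i` is happy exactly when one of them is an angle of `M'`. Two consecutive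
vertices happy on the same side would make the face of `M'` through both angles a triangle
bounded by three consecutive cycle edges, closing the cycle after three steps; this is impossible
for `n ≥ 5`. So the side on which a vertex is happy alternates around the cycle, which cannot be
if `n` is odd. -/

lemma ZMod.not_forall_iff_not_add_one {n : ℕ} (hn : Odd n) (p : ZMod n → Prop) :
    ¬ ∀ i, p (i + 1) ↔ ¬ p i := by
  intro hp
  have hp_two : ∀ i, p (i + 2) ↔ p i := fun i => by
    rw [show i + 2 = i + 1 + 1 by ring, hp, hp, not_not]
  have hp_even : ∀ k : ℕ, p (2 * k) ↔ p 0 := by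
    intro k
    induction k with
    | zero => simp
    | succ k ih => rw [Nat.cast_succ, mul_add_one, hp_two, ih]
  obtain ⟨m, rfl⟩ := hn
  have h_one : (2 * (m + 1 : ℕ) : ZMod (2 * m + 1)) = 1 := by
    have : ((2 * m + 1 + 1 : ℕ) : ZMod (2 * m + 1)) = 1 := by
      rw [Nat.cast_succ, ZMod.natCast_self, zero_add]
    rw [← this]; push_cast; ring
  have := hp_even (m + 1)
  rw [h_one, ← zero_add 1, hp] at this
  exact not_iff_self this

namespace CombMap

lemma Triangulated.sameVertex_α_φ_φ {M : CombMap} (htri : M.Triangulated) (x : M.D) :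
    M.SameVertex (M.α (M.φ (M.φ x))) x :=
  ⟨1, by rw [zpow_one]; exact (htri x).1⟩

namespace IsEdgeSubmap

variable {M M' : CombMap} {ι : M.D ↪ M'.D}

lemma φ_apply (h : M.IsEdgeSubmap M' ι) (d : M.D) : M'.φ (ι d) = M'.σ (ι (M.α d)) := by
  rw [h.alpha_comm]; rfl

lemma exists_σ_pow_eq_of_mem_range (h : M.IsEdgeSubmap M' ι) (m : ℕ) (d : M.D)
    (hm : (M'.σ ^ m) (ι d) ∈ Set.range ι) : ∃ l : ℕ, (M'.σ ^ m) (ι d) = ι ((M.σ ^ l) d) := by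
  induction m using Nat.strong_induction_on generalizing d with
  | _ m ih =>
    obtain ⟨k, hk_pos, hk, hk_min⟩ := h.rotation d
    rcases Nat.lt_or_ge m k with hmk | hkm
    · rcases Nat.eq_zero_or_pos m with rfl | hm_pos
      · exact ⟨0, rfl⟩
      · exact absurd hm (hk_min m hm_pos hmk)
    · have hsplit : (M'.σ ^ m) (ι d) = (M'.σ ^ (m - k)) (ι (M.σ d)) := by
        rw [hk, ← Equiv.Perm.mul_apply, ← pow_add, Nat.sub_add_cancel hkm]
      rw [hsplit] at hm ⊢
      obtain ⟨l, hl⟩ := ih (m - k) (by omega) (M.σ d) hm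
      exact ⟨l + 1, by rw [hl, pow_succ, Equiv.Perm.mul_apply]⟩

lemma sameVertex_of_map (h : M.IsEdgeSubmap M' ι) {d e : M.D}
    (hde : M'.SameVertex (ι d) (ι e)) : M.SameVertex d e := by
  obtain ⟨m, -, hm⟩ := Equiv.Perm.SameCycle.exists_pow_eq' hde
  obtain ⟨l, hl⟩ := h.exists_σ_pow_eq_of_mem_range m d ⟨e, hm.symm⟩
  exact ⟨l, by rw [zpow_natCast]; exact ι.injective (hl.symm.trans hm)⟩

lemma σ_apply_of_mem_range (h : M.IsEdgeSubmap M' ι) {d : M.D}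
    (hd : M'.σ (ι d) ∈ Set.range ι) : M'.σ (ι d) = ι (M.σ d) := by
  obtain ⟨k, hk_pos, hk, hk_min⟩ := h.rotation d
  obtain rfl | hk_gt := (Nat.succ_le_of_lt hk_pos).eq_or_lt
  · simpa using hk.symm
  · exact absurd (by simpa using hd) (hk_min 1 one_pos hk_gt)

end IsEdgeSubmap

end CombMap

section CycleMap

variable {n : ℕ} [NeZero n]

lemma cycleMap_fst_eq_of_sameVertex {d e : (cycleMap n).D} (h : (cycleMap n).SameVertex d e) :
    d.1 = e.1 := by
  obtain ⟨m, -, rfl⟩ := Equiv.Perm.SameCycle.exists_pow_eq' h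
  clear h
  induction m with
  | zero => rfl
  | succ m ih => rw [pow_succ', Equiv.Perm.mul_apply]; exact ih

variable {M' : CombMap} {ι : (cycleMap n).D ↪ M'.D}

/-- `b` selects the side of the cycle at its vertex `i`. -/
def IsCycleAngle (ι : (cycleMap n).D ↪ M'.D) (i : ZMod n) (b : Bool) : Prop :=
  M'.σ (ι (i, b)) = ι (i, !b)

lemma exists_isCycleAngle_of_happyAt (hsub : (cycleMap n).IsEdgeSubmap M' ι) {i : ZMod n}
    (hi : M'.HappyAt (Set.range ι) (ι (i, true))) : ∃ b, IsCycleAngle ι i b := by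
  obtain ⟨_, hvert, ⟨⟨j, b⟩, rfl⟩, hσ⟩ := hi
  obtain rfl : i = j := cycleMap_fst_eq_of_sameVertex (hsub.sameVertex_of_map hvert)
  exact ⟨b, hsub.σ_apply_of_mem_range hσ⟩

lemma not_isCycleAngle_add_one (hsub : (cycleMap n).IsEdgeSubmap M' ι) (htri : M'.Triangulated)
    (h3 : (3 : ZMod n) ≠ 0) {i : ZMod n} {b : Bool} (hi : IsCycleAngle ι i b) :
    ¬ IsCycleAngle ι (i + 1) b := by
  intro hi'
  have α_true (j : ZMod n) : M'.α (ι (j, true)) = ι (j + 1, false) := (hsub.alpha_comm _).symm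
  have α_false (j : ZMod n) : M'.α (ι (j, false)) = ι (j - 1, true) := (hsub.alpha_comm _).symm
  have φ_true (j : ZMod n) : M'.φ (ι (j, true)) = M'.σ (ι (j + 1, false)) := hsub.φ_apply _
  have φ_false (j : ZMod n) : M'.φ (ι (j, false)) = M'.σ (ι (j - 1, true)) := hsub.φ_apply _
  cases b
  · change M'.σ (ι (i, false)) = ι (i, true) at hi
    change M'.σ (ι (i + 1, false)) = ι (i + 1, true) at hi'
    have htriangle := htri.sameVertex_α_φ_φ (ι (i - 1, true))
    rw [φ_true, sub_add_cancel, hi, φ_true, hi', α_true] at htriangle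
    have hfst := cycleMap_fst_eq_of_sameVertex (hsub.sameVertex_of_map htriangle)
    exact h3 (by linear_combination hfst)
  · change M'.σ (ι (i, true)) = ι (i, false) at hi
    change M'.σ (ι (i + 1, true)) = ι (i + 1, false) at hi'
    have htriangle := htri.sameVertex_α_φ_φ (ι (i + 2, false))
    rw [φ_false, show i + 2 - 1 = i + 1 by ring, hi', φ_false, add_sub_cancel_right, hi,
      α_false] at htriangle
    have hfst := cycleMap_fst_eq_of_sameVertex (hsub.sameVertex_of_map htriangle)
    exact h3 (by linear_combination -hfst)

end CycleMap

theorem odd_cycle_has_unhappy_vertex_general (n : ℕ) [NeZero n]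
    (hn : 5 ≤ n) (hodd : Odd n)
    (M' : CombMap)
    (htri : M'.Triangulated)
    (ι : (cycleMap n).D ↪ M'.D)
    (hsub : CombMap.IsEdgeSubmap (cycleMap n) M' ι) :
    ∃ i : ZMod n, ¬ M'.HappyAt (Set.range ι) (ι ((i, true) : ZMod n × Bool)) := by
  by_contra! hhappy
  have h3 : (3 : ZMod n) ≠ 0 := fun h => by
    have := Nat.le_of_dvd three_pos ((ZMod.natCast_eq_zero_iff 3 n).mp (by exact_mod_cast h))
    omega
  refine ZMod.not_forall_iff_not_add_one hodd (fun i => IsCycleAngle ι i false) fun i => ?_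
  refine ⟨fun hi' hi => not_isCycleAngle_add_one hsub htri h3 hi hi', fun hi => ?_⟩
  obtain ⟨b, hb⟩ := exists_isCycleAngle_of_happyAt hsub (hhappy (i + 1))
  cases b
  · exact hb
  · obtain ⟨c, hc⟩ := exists_isCycleAngle_of_happyAt hsub (hhappy i)
    cases c
    · exact absurd hc hi
    · exact absurd hb (not_isCycleAngle_add_one hsub htri h3 hc)

/-- Let `C` be a cycle of odd length `n ≥ 5` drawn in the
plane.  In any plane triangulation `M'` (without loops) obtained from
`C` by adding edges, some vertex `i` of `C` is unhappy: no angle of `M'`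
at `i` (pair of darts consecutive in the rotation) consists of two darts
of `C`.  (All faces of `M'` are triangles, so this says exactly that no
triangular face of `M'` has its angle at `i` formed by two edges of
`C`.) -/
theorem odd_cycle_has_unhappy_vertex (n : ℕ) [NeZero n]
    (hn : 5 ≤ n) (hodd : Odd n)
    (M' : CombMap) (hpl : M'.Planar) (hloop : M'.Loopless)
    (htri : M'.Triangulated)
    (ι : (cycleMap n).D ↪ M'.D)
    (hsub : CombMap.IsEdgeSubmap (cycleMap n) M' ι) :
    ∃ i : ZMod n, ¬ M'.HappyAt (Set.range ι) (ι ((i, true) : ZMod n × Bool)) :=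
  odd_cycle_has_unhappy_vertex_general n hn hodd M' htri ι hsub
end

section
/- Let G be a planar multigraph obtained from n/4 disjoint copies of K_4 by replacing every edge of each K_4 by a pair of parallel edges (forming a bigon) and then adding arbitrary further edges to make the graph connected and planar. Then any vertex set S that hits every face of G satisfies |S| ≥ (3/4)n. -/
/-- The number of vertices of `M` represented by darts in `S`. -/
noncomputable def CombMap.vertexCount (M : CombMap) (S : Set M.D) : ℕ :=
  Nat.card {v : Quotient (M.orbitSetoid M.σ) //
    ∃ d ∈ S, Quotient.mk (M.orbitSetoid M.σ) d = v}

/-!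
A face of degree two is a single `φ`-orbit `{d, φ d}`, so a vertex set hitting it contains the
vertex of `d` or of `φ d`. Hence, for each copy of `K₄`, the labels of the vertices of `S` in
that copy form a vertex cover of `K₄`, which has at least three vertices; and since the labelling
is constant on vertices, `S` has at least as many vertices as labels.
-/

theorem Equiv.Perm.SameCycle.eq_or_eq_apply_of_apply_apply_eq {α : Type*} {f : Equiv.Perm α}
    {x y : α} (hx : f (f x) = x) (h : f.SameCycle x y) : y = x ∨ y = f x := by
  obtain ⟨k, rfl⟩ := h
  have hx2 : (f ^ (2 : ℤ)) x = x := hx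
  rw [← Int.emod_add_mul_ediv k 2, zpow_add, zpow_mul, Equiv.Perm.mul_apply,
    zpow_apply_eq_self_of_apply_eq_self hx2]
  rcases Int.emod_two_eq_zero_or_one k with h | h <;> simp [h]

theorem Equiv.Perm.SameCycle.apply_eq_of_invariant {α β : Type*} [Finite α] {f : Equiv.Perm α}
    {g : α → β} (hg : ∀ x, g (f x) = g x) {x y : α} (h : f.SameCycle x y) : g y = g x := by
  obtain ⟨n, rfl⟩ := h.exists_nat_pow_eq
  rw [Equiv.Perm.coe_pow]
  exact congrFun (Function.iterate_invariant (funext hg) n) x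

theorem Set.card_mul_le_encard_of_le_encard_fiber {ι κ : Type*} [Fintype ι] (T : Set (ι × κ))
    {k : ℕ∞} (h : ∀ i, k ≤ {b | (i, b) ∈ T}.encard) : Fintype.card ι * k ≤ T.encard := by
  have hT : T = ⋃ i, Prod.mk i '' {b | (i, b) ∈ T} := by
    ext ⟨i, b⟩
    simp
  have hdisj : Pairwise (Function.onFun Disjoint fun i => Prod.mk i '' {b | (i, b) ∈ T}) := by
    intro i j hij
    simp only [Function.onFun, Set.disjoint_left, Set.mem_image]
    rintro _ ⟨b, -, rfl⟩ ⟨c, -, hc⟩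
    exact hij (Prod.ext_iff.1 hc).1.symm
  calc (Fintype.card ι : ℕ∞) * k = ∑ _i : ι, k := by simp
    _ ≤ ∑ i, {b | (i, b) ∈ T}.encard := Finset.sum_le_sum fun i _ => h i
    _ = ∑ᶠ i, (Prod.mk i '' {b | (i, b) ∈ T}).encard := by
      simp [finsum_eq_sum_of_fintype, Prod.mk_right_injective _ |>.encard_image]
    _ = T.encard := by rw [← Set.encard_iUnion_of_finite hdisj, ← hT]

theorem SimpleGraph.IsVertexCover.card_sub_one_le_encard {V : Type*} [Fintype V] {c : Set V}
    (hc : (SimpleGraph.completeGraph V).IsVertexCover c) :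
    (Fintype.card V : ℕ∞) - 1 ≤ c.encard := by
  simpa [SimpleGraph.vertexCoverNum_top] using hc.vertexCoverNum_le

theorem CombMap.encard_image_le_vertexCount {M : CombMap} {β : Type*} {f : M.D → β}
    (hf : ∀ d, f (M.σ d) = f d) (S : Set M.D) : (f '' S).encard ≤ M.vertexCount S := by
  let f' : Quotient (M.orbitSetoid M.σ) → β :=
    Quotient.lift f fun _ _ h => (Equiv.Perm.SameCycle.apply_eq_of_invariant hf h).symm
  have hcomp : f '' S = f' '' (Quotient.mk _ '' S) := by rw [Set.image_image]; rfl
  change _ ≤ ((Nat.card (Quotient.mk _ '' S) : ℕ) : ℕ∞)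
  rw [Nat.card_coe_set_eq, (Set.toFinite _).cast_ncard_eq, hcomp]
  exact Set.encard_image_le _ _

theorem bigon_K4_lower_bound_general (m : ℕ) (M : CombMap)
    (ℓ : M.D → Fin m × Fin 4)
    (hconst : ∀ d, ℓ (M.σ d) = ℓ d)
    (hbigon : ∀ (i : Fin m) (a b : Fin 4), a ≠ b →
      ∃ d : M.D, M.φ (M.φ d) = d ∧ M.φ d ≠ d ∧
        ℓ d = (i, a) ∧ ℓ (M.φ d) = (i, b)) :
    ∀ S : Set M.D, (∀ d, d ∈ S ↔ M.σ d ∈ S) →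
      (∀ d : M.D, ∃ e ∈ S, M.SameFace d e) →
      3 * m ≤ M.vertexCount S := by
  intro S _ hhit
  have hcover (i : Fin m) :
      (SimpleGraph.completeGraph (Fin 4)).IsVertexCover {a | (i, a) ∈ ℓ '' S} := by
    intro a b hab
    obtain ⟨d, hd, -, hda, hdb⟩ := hbigon i a b hab
    obtain ⟨e, heS, hde⟩ := hhit d
    rcases Equiv.Perm.SameCycle.eq_or_eq_apply_of_apply_apply_eq hd hde with rfl | rfl
    exacts [Or.inl ⟨e, heS, hda⟩, Or.inr ⟨_, heS, hdb⟩]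
  have hcopy (i : Fin m) : 3 ≤ {a | (i, a) ∈ ℓ '' S}.encard :=
    (hcover i).card_sub_one_le_encard
  have hlabels : ((3 * m : ℕ) : ℕ∞) ≤ (ℓ '' S).encard := by
    simpa [mul_comm] using (ℓ '' S).card_mul_le_encard_of_le_encard_fiber hcopy
  exact_mod_cast hlabels.trans (M.encard_image_le_vertexCount hconst S)

/-- Let `G` be a connected plane multigraph on `n = 4m`
vertices, labelled by `Fin m × Fin 4` (`m` copies of `K₄`, the labelling
`ℓ` is constant on rotations and distinguishes vertices), such that for
every copy `i` and every pair of distinct vertices `a ≠ b` of that copy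
there is a bigon (a face of degree 2) whose two boundary darts sit at
`(i,a)` and `(i,b)` — i.e. every edge of each `K₄` has been replaced by a
pair of parallel edges, and further edges were added arbitrarily to make
the graph connected and plane.  Then any set `S` of vertices (darts
closed under the rotation) hitting every face satisfies
`|S| ≥ 3m = (3/4)·n`. -/
theorem bigon_K4_lower_bound (m : ℕ) (hm : 0 < m) (M : CombMap)
    (hpl : M.Planar) (hconn : M.Connected)
    (ℓ : M.D → Fin m × Fin 4)
    (hconst : ∀ d, ℓ (M.σ d) = ℓ d)
    (hsep : ∀ d d', ℓ d = ℓ d' → M.SameVertex d d')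
    (hn : M.nV = 4 * m)
    (hbigon : ∀ (i : Fin m) (a b : Fin 4), a ≠ b →
      ∃ d : M.D, M.φ (M.φ d) = d ∧ M.φ d ≠ d ∧
        ℓ d = (i, a) ∧ ℓ (M.φ d) = (i, b)) :
    ∀ S : Set M.D, (∀ d, d ∈ S ↔ M.σ d ∈ S) →
      (∀ d : M.D, ∃ e ∈ S, M.SameFace d e) →
      3 * m ≤ M.vertexCount S :=
  bigon_K4_lower_bound_general m M ℓ hconst hbigon
end
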